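/- arXiv:math/9509214 — 7 statements merged into one kernel-verified Lean document; each statement's English description precedes it below -/
import Mathlib

section
/- Let H be a separable Hilbert space and let {f_i}_{i∈I} be a Riesz frame for H, i.e., a frame such that every subfamily {f_i}_{i∈J}, J ⊆ I, is a frame for its closed linear span, with a lower frame bound A > 0 common to all these subfamilies. Then {f_i}_{i∈I} contains a Riesz basis for H: there exists a subset I′ ⊆ I such that {f_i}_{i∈I′} is a Riesz basis for H. -/
/-!
A maximal linearly independent subfamily `f_J` (Zorn) has the same span as `f`, which is dense
because of the lower frame bound. The upper Riesz bound follows from the Bessel bound by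
Cauchy–Schwarz. For the lower one, fix a finite `s ⊆ J` and coefficients `a`; linear independence
gives `y ∈ span f_s` with `⟪y, f_i⟫ = a_i` for `i ∈ s`, so that `∑ a_i² = ⟪∑ a_i f_i, y⟫ ≤
‖∑ a_i f_i‖ ‖y‖`, while the common lower frame bound of `f_s` gives `A ‖y‖² ≤ ∑ a_i²`.
-/

open scoped BigOperators

/-- `f` is a Riesz basis for `H`: its closed linear span is all of `H` and there are
constants `c, C > 0` with `c·∑|aᵢ|² ≤ ‖∑ aᵢ fᵢ‖² ≤ C·∑|aᵢ|²` for every finitely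
supported scalar sequence. -/
def IsRieszBasis {H : Type*} [NormedAddCommGroup H] [InnerProductSpace ℝ H]
    {I : Type*} (f : I → H) : Prop :=
  (Submodule.span ℝ (Set.range f)).topologicalClosure = ⊤ ∧
  ∃ c C : ℝ, 0 < c ∧ 0 < C ∧ ∀ (s : Finset I) (a : I → ℝ),
    c * ∑ i ∈ s, (a i) ^ 2 ≤ ‖∑ i ∈ s, a i • f i‖ ^ 2 ∧
    ‖∑ i ∈ s, a i • f i‖ ^ 2 ≤ C * ∑ i ∈ s, (a i) ^ 2

open Submodule Set
open scoped InnerProductSpace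

section

variable {H : Type*} [NormedAddCommGroup H] [InnerProductSpace ℝ H] {ι : Type*}

lemma exists_inner_eq_of_linearIndependent [Fintype ι] {v : ι → H}
    (hv : LinearIndependent ℝ v) (a : ι → ℝ) :
    ∃ y ∈ span ℝ (range v), ∀ i, ⟪y, v i⟫_ℝ = a i := by
  have : FiniteDimensional ℝ (span ℝ (range v)) :=
    FiniteDimensional.span_of_finite ℝ (finite_range v)
  let b := Module.Basis.span hv
  let φ : StrongDual ℝ (span ℝ (range v)) := LinearMap.toContinuousLinearMap (b.constr ℝ a)
  refine ⟨(InnerProductSpace.toDual ℝ (span ℝ (range v))).symm φ, coe_mem _, fun i => ?_⟩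
  rw [← Module.Basis.coe_span_apply hv i, ← coe_inner,
    InnerProductSpace.toDual_symm_apply]
  exact b.constr_basis ℝ a i

lemma mul_sum_sq_le_norm_sum_smul_sq {A : ℝ} (hA : 0 ≤ A) {v : ι → H} {s : Finset ι}
    (hv : LinearIndependent ℝ (fun i : s => v i))
    (hlb : ∀ x ∈ span ℝ (v '' s), A * ‖x‖ ^ 2 ≤ ∑ i ∈ s, ⟪x, v i⟫_ℝ ^ 2) (a : ι → ℝ) :
    A * ∑ i ∈ s, a i ^ 2 ≤ ‖∑ i ∈ s, a i • v i‖ ^ 2 := by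
  obtain ⟨y, hy, hya⟩ := exists_inner_eq_of_linearIndependent hv (fun i => a i)
  have hy' : y ∈ span ℝ (v '' s) := by rw [image_eq_range]; exact hy
  set x := ∑ i ∈ s, a i • v i
  set S := ∑ i ∈ s, a i ^ 2
  have hyS : A * ‖y‖ ^ 2 ≤ S := by
    refine (hlb y hy').trans_eq ?_
    rw [← Finset.sum_coe_sort s]
    simp only [hya]
    exact Finset.sum_coe_sort s (fun i => a i ^ 2)
  have hxy : ⟪x, y⟫_ℝ = S := by
    simp only [x, S, sum_inner, real_inner_smul_left, sq]
    refine Finset.sum_congr rfl fun i hi => ?_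
    rw [real_inner_comm, hya ⟨i, hi⟩]
  have hS : 0 ≤ S := Finset.sum_nonneg fun i _ => sq_nonneg (a i)
  have hSxy : S ≤ ‖x‖ * ‖y‖ := hxy ▸ real_inner_le_norm x y
  rcases hS.eq_or_lt with hS0 | hSpos
  · rw [← hS0, mul_zero]
    positivity
  have : A * S * S ≤ ‖x‖ ^ 2 * S :=
    calc A * S * S ≤ A * (‖x‖ * ‖y‖) ^ 2 := by
          rw [mul_assoc, ← sq]; gcongr
      _ = ‖x‖ ^ 2 * (A * ‖y‖ ^ 2) := by ring
      _ ≤ ‖x‖ ^ 2 * S := by gcongr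
  exact le_of_mul_le_mul_right this hSpos

lemma norm_sum_smul_sq_le_mul_sum_sq {B : ℝ} (hB : 0 ≤ B) {v : ι → H}
    (hbessel : ∀ x (s : Finset ι), ∑ i ∈ s, ⟪x, v i⟫_ℝ ^ 2 ≤ B * ‖x‖ ^ 2)
    (s : Finset ι) (a : ι → ℝ) :
    ‖∑ i ∈ s, a i • v i‖ ^ 2 ≤ B * ∑ i ∈ s, a i ^ 2 := by
  set x := ∑ i ∈ s, a i • v i
  set S := ∑ i ∈ s, a i ^ 2
  have hS : 0 ≤ S := Finset.sum_nonneg fun i _ => sq_nonneg (a i)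
  rcases eq_or_ne x 0 with hx0 | hx0
  · simpa [hx0] using mul_nonneg hB hS
  have hxx : ‖x‖ ^ 2 = ∑ i ∈ s, a i * ⟪x, v i⟫_ℝ := by
    conv_lhs => rw [← real_inner_self_eq_norm_sq, inner_sum]
    simp only [real_inner_smul_right]
  have : ‖x‖ ^ 2 * ‖x‖ ^ 2 ≤ B * S * ‖x‖ ^ 2 :=
    calc ‖x‖ ^ 2 * ‖x‖ ^ 2 = (∑ i ∈ s, a i * ⟪x, v i⟫_ℝ) ^ 2 := by rw [← hxx]; ring
      _ ≤ S * ∑ i ∈ s, ⟪x, v i⟫_ℝ ^ 2 := Finset.sum_mul_sq_le_sq_mul_sq s _ _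
      _ ≤ S * (B * ‖x‖ ^ 2) := by gcongr; exact hbessel x s
      _ = B * S * ‖x‖ ^ 2 := by ring
  exact le_of_mul_le_mul_right this (by positivity)

lemma sum_inner_sq_le_of_frameBounds {A B : ℝ} (hA : 0 < A) {v : ι → H} {x : H}
    (hlb : A * ‖x‖ ^ 2 ≤ ∑' i, ⟪x, v i⟫_ℝ ^ 2) (hub : ∑' i, ⟪x, v i⟫_ℝ ^ 2 ≤ B * ‖x‖ ^ 2)
    (s : Finset ι) : ∑ i ∈ s, ⟪x, v i⟫_ℝ ^ 2 ≤ B * ‖x‖ ^ 2 := by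
  rcases eq_or_ne x 0 with rfl | hx0
  · simp
  have hsum : Summable fun i => ⟪x, v i⟫_ℝ ^ 2 := by
    by_contra hns
    rw [tsum_eq_zero_of_not_summable hns] at hlb
    have : 0 < A * ‖x‖ ^ 2 := by positivity
    linarith
  exact (hsum.sum_le_tsum s fun i _ => sq_nonneg _).trans hub

lemma topologicalClosure_span_eq_top_of_lowerFrameBound [CompleteSpace H] {A : ℝ} (hA : 0 < A)
    {v : ι → H} (hlb : ∀ x, A * ‖x‖ ^ 2 ≤ ∑' i, ⟪x, v i⟫_ℝ ^ 2) :
    (span ℝ (range v)).topologicalClosure = ⊤ := by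
  rw [topologicalClosure_eq_top_iff, eq_bot_iff]
  intro x hx
  have hvx : ∀ i, ⟪x, v i⟫_ℝ = 0 := fun i =>
    inner_left_of_mem_orthogonal (subset_span (mem_range_self i)) hx
  have : A * ‖x‖ ^ 2 ≤ 0 := by simpa [hvx] using hlb x
  have : ‖x‖ ^ 2 ≤ 0 := nonpos_of_mul_nonpos_right this hA
  simpa using this

end

theorem stmt_0_general {H : Type*} [NormedAddCommGroup H] [InnerProductSpace ℝ H]
    [CompleteSpace H]
    {I : Type*} (f : I → H)
    -- `f` is a frame for `H`
    (hframe : ∃ A B : ℝ, 0 < A ∧ 0 < B ∧ ∀ x : H,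
      A * ‖x‖ ^ 2 ≤ ∑' i, (inner ℝ x (f i) : ℝ) ^ 2 ∧
      ∑' i, (inner ℝ x (f i) : ℝ) ^ 2 ≤ B * ‖x‖ ^ 2)
    -- every subfamily is a frame for its closed linear span, with a common lower bound `A`
    (A : ℝ) (hA : 0 < A)
    (hsub : ∀ J : Set I, ∃ B : ℝ, 0 < B ∧
      ∀ x ∈ (Submodule.span ℝ (f '' J)).topologicalClosure,
        A * ‖x‖ ^ 2 ≤ ∑' i : J, (inner ℝ x (f (i : I)) : ℝ) ^ 2 ∧
        ∑' i : J, (inner ℝ x (f (i : I)) : ℝ) ^ 2 ≤ B * ‖x‖ ^ 2) :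
    ∃ I' : Set I, IsRieszBasis (fun i : I' => f (i : I)) := by
  obtain ⟨A₀, B, hA₀, hB, hfr⟩ := hframe
  obtain ⟨J, -, -, hspan, hli⟩ :=
    exists_linearIndepOn_extension (linearIndepOn_empty ℝ f) (empty_subset univ)
  refine ⟨J, ?_, A, B, hA, hB, fun s a => ⟨?_, ?_⟩⟩
  · have hdense := topologicalClosure_span_eq_top_of_lowerFrameBound hA₀ fun x => (hfr x).1
    refine top_unique (hdense.ge.trans (topologicalClosure_mono ?_))
    rw [← image_eq_range, span_le, ← image_univ]
    exact hspan
  · set t : Finset I := s.map (Function.Embedding.subtype _)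
    have hlb : ∀ x ∈ span ℝ ((fun i : J => f i) '' s),
        A * ‖x‖ ^ 2 ≤ ∑ i ∈ s, ⟪x, f i⟫_ℝ ^ 2 := by
      intro x hx
      obtain ⟨_, -, ht⟩ := hsub t
      have hxt : x ∈ (span ℝ (f '' t)).topologicalClosure := by
        rw [Finset.coe_map, image_image]
        exact le_topologicalClosure _ hx
      exact (ht x hxt).1.trans_eq <|
        (Finset.tsum_subtype t fun i => ⟪x, f i⟫_ℝ ^ 2).trans (Finset.sum_map _ _ _)
    exact mul_sum_sq_le_norm_sum_smul_sq hA.le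
      (hli.comp (fun i : s => (i : J)) Subtype.val_injective) hlb a
  · refine norm_sum_smul_sq_le_mul_sum_sq hB.le (fun x t => ?_) s a
    simpa using sum_inner_sq_le_of_frameBounds hA₀ (hfr x).1 (hfr x).2
      (t.map (Function.Embedding.subtype _))

theorem stmt_0 {H : Type*} [NormedAddCommGroup H] [InnerProductSpace ℝ H]
    [CompleteSpace H] [TopologicalSpace.SeparableSpace H]
    {I : Type*} (f : I → H)
    -- `f` is a frame for `H`
    (hframe : ∃ A B : ℝ, 0 < A ∧ 0 < B ∧ ∀ x : H,
      A * ‖x‖ ^ 2 ≤ ∑' i, (inner ℝ x (f i) : ℝ) ^ 2 ∧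
      ∑' i, (inner ℝ x (f i) : ℝ) ^ 2 ≤ B * ‖x‖ ^ 2)
    -- every subfamily is a frame for its closed linear span, with a common lower bound `A`
    (A : ℝ) (hA : 0 < A)
    (hsub : ∀ J : Set I, ∃ B : ℝ, 0 < B ∧
      ∀ x ∈ (Submodule.span ℝ (f '' J)).topologicalClosure,
        A * ‖x‖ ^ 2 ≤ ∑' i : J, (inner ℝ x (f (i : I)) : ℝ) ^ 2 ∧
        ∑' i : J, (inner ℝ x (f (i : I)) : ℝ) ^ 2 ≤ B * ‖x‖ ^ 2) :
    ∃ I' : Set I, IsRieszBasis (fun i : I' => f (i : I)) :=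
  stmt_0_general f hframe A hA hsub
end

section
/- Let {f_i}_{i∈I} be a frame for a separable Hilbert space H. Given ε > 0 and a finite set J ⊆ I, there exists a finite set J′ ⊆ I containing J such that ∑_{i∈I∖J′} |⟨f, f_i⟩|² ≤ ε·‖f‖² for all f in the linear span of {f_i}_{i∈J}. -/
open scoped BigOperators

/-- `f` is a frame for the closed subspace `V`: there are bounds `A, B > 0` with
`A‖x‖² ≤ ∑_i |⟨x, f i⟩|² ≤ B‖x‖²` for all `x ∈ V`. -/
def IsFrameFor {H : Type*} [NormedAddCommGroup H] [InnerProductSpace ℝ H]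
    {I : Type*} (f : I → H) (V : Set H) : Prop :=
  ∃ A B : ℝ, 0 < A ∧ 0 < B ∧ ∀ x ∈ V,
    A * ‖x‖ ^ 2 ≤ ∑' i, (inner ℝ x (f i) : ℝ) ^ 2 ∧
    ∑' i, (inner ℝ x (f i) : ℝ) ^ 2 ≤ B * ‖x‖ ^ 2

/-!
Let `P` be the orthogonal projection onto `K = span {f j | j ∈ J}`. For `x ∈ K`,
`⟪x, f i⟫ = ⟪x, P f i⟫`, so Cauchy–Schwarz gives `⟪x, f i⟫² ≤ ‖x‖² ‖P f i‖²`. Expanding `P f i` in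
an orthonormal basis `b` of the finite-dimensional `K` shows `∑ᵢ ‖P f i‖² = ∑ₖ ∑ᵢ ⟪b k, f i⟫²`,
which is finite by the frame inequality. Hence the tails of `∑ᵢ ‖P f i‖²` tend to zero, and they
control the tails of `∑ᵢ ⟪x, f i⟫²` uniformly in `x ∈ K` with the factor `‖x‖²`.
-/

open Filter
open scoped RealInnerProductSpace

section

variable {H : Type*} [NormedAddCommGroup H] [InnerProductSpace ℝ H] {I : Type*}

/-- The lower frame bound rules out the junk value `∑' = 0` of a divergent series at `x ≠ 0`. -/
theorem IsFrameFor.summable_inner_sq {f : I → H} {V : Set H} (hf : IsFrameFor f V) {x : H}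
    (hx : x ∈ V) : Summable fun i => ⟪x, f i⟫ ^ 2 := by
  obtain ⟨A, _, hA, _, hAB⟩ := hf
  by_contra hdiv
  have hle := (hAB x hx).1
  rw [tsum_eq_zero_of_not_summable hdiv] at hle
  have hx0 : x = 0 := by
    by_contra hx0
    have := norm_pos_iff.mpr hx0
    nlinarith [mul_pos hA (pow_pos this 2)]
  exact hdiv (by simp [hx0])

namespace Submodule

variable {K : Submodule ℝ H}

theorem inner_sq_le_norm_sq_mul_norm_sq_orthogonalProjectionOnto [K.HasOrthogonalProjection]
    {x : H} (hx : x ∈ K) (y : H) :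
    ⟪x, y⟫ ^ 2 ≤ ‖x‖ ^ 2 * ‖K.orthogonalProjectionOnto y‖ ^ 2 := by
  have hproj : ⟪x, y⟫ = ⟪(⟨x, hx⟩ : K), K.orthogonalProjectionOnto y⟫ :=
    (inner_orthogonalProjectionOnto_eq_of_mem_left (⟨x, hx⟩ : K) y).symm
  rw [hproj, ← mul_pow, ← sq_abs]
  gcongr
  exact abs_real_inner_le_norm _ _

theorem summable_norm_sq_orthogonalProjectionOnto [FiniteDimensional ℝ K] {f : I → H}
    (hsum : ∀ x ∈ K, Summable fun i => ⟪x, f i⟫ ^ 2) :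
    Summable fun i => ‖K.orthogonalProjectionOnto (f i)‖ ^ 2 := by
  let b := stdOrthonormalBasis ℝ K
  have hparseval : ∀ y : H, ‖K.orthogonalProjectionOnto y‖ ^ 2 = ∑ k, ⟪(b k : H), y⟫ ^ 2 := by
    intro y
    simp only [← b.sum_sq_inner_right, inner_orthogonalProjectionOnto_eq_of_mem_left]
  simp only [hparseval]
  exact summable_sum fun k _ => hsum _ (b k).2

theorem eventually_tsum_compl_inner_sq_le [FiniteDimensional ℝ K] {f : I → H}
    (hsum : ∀ x ∈ K, Summable fun i => ⟪x, f i⟫ ^ 2) {ε : ℝ} (hε : 0 < ε) :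
    ∀ᶠ t : Finset I in atTop, ∀ x ∈ K,
      ∑' i : {i : I // i ∉ t}, ⟪x, f i⟫ ^ 2 ≤ ε * ‖x‖ ^ 2 := by
  set g := fun i => ‖K.orthogonalProjectionOnto (f i)‖ ^ 2
  have hg : Summable g := summable_norm_sq_orthogonalProjectionOnto hsum
  filter_upwards [(tendsto_tsum_compl_atTop_zero g).eventually (ge_mem_nhds hε)] with t ht x hx
  calc ∑' i : {i : I // i ∉ t}, ⟪x, f i⟫ ^ 2
      ≤ ∑' i : {i : I // i ∉ t}, ‖x‖ ^ 2 * g i :=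
        ((hsum x hx).subtype _).tsum_le_tsum
          (fun i => inner_sq_le_norm_sq_mul_norm_sq_orthogonalProjectionOnto hx _)
          ((hg.subtype _).mul_left _)
    _ = ‖x‖ ^ 2 * ∑' i : {i : I // i ∉ t}, g i := tsum_mul_left
    _ ≤ ε * ‖x‖ ^ 2 := by rw [mul_comm]; gcongr

end Submodule

end

theorem stmt_1_general {H : Type*} [NormedAddCommGroup H] [InnerProductSpace ℝ H]
    {I : Type*} (f : I → H) (hf : IsFrameFor f (Set.univ : Set H))
    (ε : ℝ) (hε : 0 < ε) (J : Finset I) :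
    ∃ J' : Finset I, J ⊆ J' ∧
      ∀ x ∈ Submodule.span ℝ (f '' (J : Set I)),
        ∑' i : {i : I // i ∉ J'}, (inner ℝ x (f (i : I)) : ℝ) ^ 2 ≤ ε * ‖x‖ ^ 2 := by
  have : FiniteDimensional ℝ (Submodule.span ℝ (f '' (J : Set I))) :=
    FiniteDimensional.span_of_finite ℝ (J.finite_toSet.image f)
  have htail := Submodule.eventually_tsum_compl_inner_sq_le
    (K := Submodule.span ℝ (f '' (J : Set I))) (fun x _ => hf.summable_inner_sq trivial) hε
  exact ((eventually_ge_atTop J).and htail).exists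

theorem stmt_1 {H : Type*} [NormedAddCommGroup H] [InnerProductSpace ℝ H]
    [CompleteSpace H] [TopologicalSpace.SeparableSpace H]
    {I : Type*} (f : I → H) (hf : IsFrameFor f (Set.univ : Set H))
    (ε : ℝ) (hε : 0 < ε) (J : Finset I) :
    ∃ J' : Finset I, J ⊆ J' ∧
      ∀ x ∈ Submodule.span ℝ (f '' (J : Set I)),
        ∑' i : {i : I // i ∉ J'}, (inner ℝ x (f (i : I)) : ℝ) ^ 2 ≤ ε * ‖x‖ ^ 2 :=
  stmt_1_general f hf ε hε J
end

section
/- Let {f_i}_{i∈I} be a frame for a separable Hilbert space H with the property that every subfamily {f_i}_{i∈J}, J ⊆ I, is a frame for its closed linear span. Then there exist ε > 0 and finite subsets J ⊆ J′ ⊆ I with the property: for every J″ ⊆ I∖J′, the family {f_i}_{i∈J∪J″} has lower frame bound ≥ ε for its closed linear span. -/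
/-!
Suppose the conclusion fails. A vector in the closed span of `{f i}_{i ∈ J ∪ J''}` with
coefficient mass below `ε ‖x‖²` can be approximated, using the upper frame bound, by a vector
in the span of finitely many of these `f i` whose mass on `J ∪ J''` is below `16 ε` times its
squared norm. Iterating with `ε = 1/(k+1)` gives increasing finite sets `F k`, `E k` and
vectors `y k` in the span of `F (k+1)`, where every index added after step `k` avoids
`E (k+1)`, and `E (k+1)` is chosen so that `y k` has mass below `‖y k‖²/(k+1)` outside it.
Hence on `Λ = ⋃ F k` the mass of `y k` is below `17 ‖y k‖²/(k+1)`, contradicting the lower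
frame bound of `{f i}_{i ∈ Λ}`.
-/

open scoped BigOperators

open Set Filter Submodule

lemma tsum_subtype_le_add_of_subset_union {I : Type*} {g : I → ℝ} (hg : ∀ i, 0 ≤ g i)
    (hs : Summable g) {S T U : Set I} (h : S ⊆ T ∪ U) :
    ∑' i : S, g i ≤ ∑' i : T, g i + ∑' i : U, g i := by
  rw [tsum_subtype, tsum_subtype, tsum_subtype,
    ← Summable.tsum_add (hs.indicator T) (hs.indicator U)]
  refine Summable.tsum_le_tsum (fun i => ?_) (hs.indicator S)
    ((hs.indicator T).add (hs.indicator U))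
  by_cases hiS : i ∈ S
  · rcases h hiS with hiT | hiU
    · simp only [indicator_of_mem hiS, indicator_of_mem hiT]
      linarith [indicator_nonneg (fun j _ => hg j) (s := U) i]
    · simp only [indicator_of_mem hiS, indicator_of_mem hiU]
      linarith [indicator_nonneg (fun j _ => hg j) (s := T) i]
  · rw [indicator_of_notMem hiS]
    exact add_nonneg (indicator_nonneg (fun j _ => hg j) i) (indicator_nonneg (fun j _ => hg j) i)

lemma Submodule.exists_finset_mem_span_image_norm_sub_lt {𝕜 E I : Type*} [NormedField 𝕜]
    [SeminormedAddCommGroup E] [NormedSpace 𝕜 E] {f : I → E} {S : Set I} {x : E}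
    (hx : x ∈ (span 𝕜 (f '' S)).topologicalClosure) {δ : ℝ} (hδ : 0 < δ) :
    ∃ T : Finset I, ↑T ⊆ S ∧ ∃ z ∈ span 𝕜 (f '' T), ‖z - x‖ < δ := by
  classical
  obtain ⟨z, hz, hxz⟩ := Metric.mem_closure_iff.mp hx δ hδ
  obtain ⟨T', hT'S, hzT'⟩ := mem_span_finite_of_mem_span hz
  obtain ⟨T, hTS, rfl⟩ := Finset.subset_set_image_iff.mp hT'S
  refine ⟨T, hTS, z, by simpa using hzT', ?_⟩
  rwa [← dist_eq_norm, dist_comm]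

lemma iUnion_subset_union_compl {α : Type*} {F E : ℕ → Set α} (hF : Monotone F)
    (hE : Monotone E) (hFE : ∀ k, F (k + 1) ⊆ F k ∪ (E k)ᶜ) (k : ℕ) :
    ⋃ j, F j ⊆ F k ∪ (E k)ᶜ := by
  refine iUnion_subset fun j => ?_
  rcases le_total j k with hjk | hkj
  · exact (hF hjk).trans subset_union_left
  · induction j, hkj using Nat.le_induction with
    | base => exact subset_union_left
    | succ j hkj ih =>
      exact (hFE j).trans (union_subset ih
        (subset_union_of_subset_right (compl_subset_compl.mpr (hE hkj)) _))

section Bessel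

variable {H I : Type*} [NormedAddCommGroup H] [InnerProductSpace ℝ H] (f : I → H)

noncomputable def besselSum (S : Set I) (x : H) : ℝ := ∑' i : S, inner ℝ x (f i) ^ 2

variable {f}

lemma besselSum_mono {S T : Set I} (hST : S ⊆ T) {x : H}
    (hx : Summable fun i => inner ℝ x (f i) ^ 2) : besselSum f S x ≤ besselSum f T x :=
  Summable.tsum_le_tsum_of_inj (inclusion hST) (inclusion_injective hST) (fun _ _ => sq_nonneg _)
    (fun _ => le_rfl) (hx.subtype S) (hx.subtype T)

lemma besselSum_le_add_of_subset_union {S T U : Set I} (h : S ⊆ T ∪ U) {x : H}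
    (hx : Summable fun i => inner ℝ x (f i) ^ 2) :
    besselSum f S x ≤ besselSum f T x + besselSum f U x :=
  tsum_subtype_le_add_of_subset_union (fun _ => sq_nonneg _) hx h

lemma besselSum_add_le (S : Set I) {x y : H} (hx : Summable fun i => inner ℝ x (f i) ^ 2)
    (hy : Summable fun i => inner ℝ y (f i) ^ 2) :
    besselSum f S (x + y) ≤ 2 * (besselSum f S x + besselSum f S y) := by
  have hle : ∀ i, inner ℝ (x + y) (f i) ^ 2 ≤ 2 * (inner ℝ x (f i) ^ 2 + inner ℝ y (f i) ^ 2) :=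
    fun i => by simpa only [inner_add_left] using add_sq_le
  have hxy : Summable fun i => inner ℝ (x + y) (f i) ^ 2 :=
    ((hx.add hy).mul_left 2).of_nonneg_of_le (fun _ => sq_nonneg _) hle
  calc besselSum f S (x + y)
      ≤ ∑' i : S, 2 * (inner ℝ x (f i) ^ 2 + inner ℝ y (f i) ^ 2) :=
        Summable.tsum_le_tsum (fun i => hle i) (hxy.subtype S) (((hx.add hy).mul_left 2).subtype S)
    _ = 2 * (besselSum f S x + besselSum f S y) := by
        rw [tsum_mul_left]
        exact congrArg _ ((hx.subtype S).tsum_add (hy.subtype S))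

namespace IsFrameFor

lemma summable {V : Set H} (hf : IsFrameFor f V) {x : H} (hx : x ∈ V) :
    Summable fun i => inner ℝ x (f i) ^ 2 := by
  obtain ⟨A, B, hA, -, hAB⟩ := hf
  by_contra hns
  -- a non-summable `tsum` is `0`, so the lower frame bound forces `x = 0`
  have hlow := (hAB x hx).1
  rw [tsum_eq_zero_of_not_summable hns] at hlow
  have hx0 : x = 0 := norm_eq_zero.mp (pow_eq_zero_iff two_ne_zero |>.mp
    (le_antisymm (nonpos_of_mul_nonpos_right hlow hA) (sq_nonneg _)))
  exact hns (by simp [hx0])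

lemma exists_besselSum_le (hf : IsFrameFor f univ) :
    ∃ B, 0 < B ∧ ∀ (S : Set I) (x : H), besselSum f S x ≤ B * ‖x‖ ^ 2 := by
  obtain ⟨_, B, _, hB, hAB⟩ := id hf
  exact ⟨B, hB, fun S x => ((hf.summable (mem_univ x)).tsum_subtype_le _ S
    (fun _ => sq_nonneg _)).trans (hAB x (mem_univ x)).2⟩

lemma exists_finset_besselSum_lt (hf : IsFrameFor f univ) {S : Set I} {x : H} {ε : ℝ}
    (hε : 0 < ε) (hx : x ∈ (span ℝ (f '' S)).topologicalClosure)
    (hxS : besselSum f S x < ε * ‖x‖ ^ 2) :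
    ∃ T : Finset I, ↑T ⊆ S ∧ ∃ y ∈ span ℝ (f '' T), y ≠ 0 ∧
      besselSum f S y < 16 * ε * ‖y‖ ^ 2 := by
  obtain ⟨B, hB, hbessel⟩ := hf.exists_besselSum_le
  have hx0 : 0 < ‖x‖ := by
    refine norm_pos_iff.mpr fun h => ?_
    simp [h, besselSum] at hxS
  set δ := min 2⁻¹ √(ε / B)
  have hδ : 0 < δ := by positivity
  have hδB : B * δ ^ 2 ≤ ε := by
    have : δ ^ 2 ≤ ε / B :=
      (pow_le_pow_left₀ hδ.le (min_le_right _ _) 2).trans (Real.sq_sqrt (by positivity)).le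
    rwa [le_div_iff₀ hB, mul_comm] at this
  obtain ⟨T, hTS, z, hz, hzx⟩ := exists_finset_mem_span_image_norm_sub_lt hx (mul_pos hδ hx0)
  have hxz : ‖x‖ ≤ 2 * ‖z‖ := by
    have := norm_sub_norm_le x z
    rw [norm_sub_rev] at this
    have : δ * ‖x‖ ≤ 2⁻¹ * ‖x‖ := by gcongr; exact min_le_left _ _
    linarith
  have hzS : besselSum f S z ≤ 2 * (besselSum f S x + besselSum f S (z - x)) := by
    simpa using besselSum_add_le S (hf.summable (mem_univ x)) (hf.summable (mem_univ (z - x)))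
  have herr : besselSum f S (z - x) ≤ ε * ‖x‖ ^ 2 :=
    calc besselSum f S (z - x) ≤ B * ‖z - x‖ ^ 2 := hbessel S _
      _ ≤ B * (δ * ‖x‖) ^ 2 := by gcongr
      _ = B * δ ^ 2 * ‖x‖ ^ 2 := by ring
      _ ≤ ε * ‖x‖ ^ 2 := by gcongr
  refine ⟨T, hTS, z, hz, ?_, ?_⟩
  · rintro rfl
    simp only [norm_zero, mul_zero] at hxz
    linarith
  · have hxz2 : ‖x‖ ^ 2 ≤ 4 * ‖z‖ ^ 2 := by nlinarith [norm_nonneg x]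
    calc besselSum f S z ≤ 2 * (besselSum f S x + besselSum f S (z - x)) := hzS
      _ < 2 * (ε * ‖x‖ ^ 2 + ε * ‖x‖ ^ 2) := by linarith
      _ = 4 * ε * ‖x‖ ^ 2 := by ring
      _ ≤ 16 * ε * ‖z‖ ^ 2 := by nlinarith

lemma exists_extend_of_besselSum_lt [DecidableEq I] (hf : IsFrameFor f univ) {ε : ℝ}
    (hε : 0 < ε) {F E : Finset I} (hbad : ∃ J ⊆ {i | i ∉ F ∪ E},
      ∃ x ∈ (span ℝ (f '' (↑F ∪ J))).topologicalClosure, besselSum f (↑F ∪ J) x < ε * ‖x‖ ^ 2) :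
    ∃ F' E' : Finset I, ∃ y : H, F ⊆ F' ∧ E ⊆ E' ∧ (F' : Set I) ⊆ ↑F ∪ (↑E)ᶜ ∧
      y ∈ span ℝ (f '' F') ∧ y ≠ 0 ∧ besselSum f F' y < 16 * ε * ‖y‖ ^ 2 ∧
      besselSum f (↑E')ᶜ y < ε * ‖y‖ ^ 2 := by
  obtain ⟨J, hJ, x, hx, hxJ⟩ := hbad
  obtain ⟨T, hT, y, hy, hy0, hyJ⟩ := hf.exists_finset_besselSum_lt hε hx hxJ
  have hFT : (↑(F ∪ T) : Set I) ⊆ ↑F ∪ J := by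
    rw [Finset.coe_union]
    exact union_subset subset_union_left hT
  obtain ⟨E', hEE', hE'⟩ := ((eventually_ge_atTop E).and
    ((tendsto_tsum_compl_atTop_zero fun i => inner ℝ y (f i) ^ 2).eventually_lt_const
      (mul_pos hε (pow_pos (norm_pos_iff.mpr hy0) 2)))).exists
  refine ⟨F ∪ T, E', y, Finset.subset_union_left, hEE', fun i hi => ?_,
    span_mono (image_mono (by simp)) hy, hy0,
    (besselSum_mono hFT (hf.summable (mem_univ y))).trans_lt hyJ, hE'⟩
  rcases hFT hi with hiF | hiJ
  · exact Or.inl hiF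
  · exact Or.inr fun hiE => hJ hiJ (Finset.mem_union_right F hiE)

lemma exists_seq_of_besselSum_lt (hf : IsFrameFor f univ)
    (hbad : ∀ ε > 0, ∀ J J' : Finset I, J ⊆ J' → ∃ J'' ⊆ {i | i ∉ J'},
      ∃ x ∈ (span ℝ (f '' (↑J ∪ J''))).topologicalClosure,
        besselSum f (↑J ∪ J'') x < ε * ‖x‖ ^ 2) :
    ∃ (F E : ℕ → Finset I) (y : ℕ → H), (Monotone fun k => (F k : Set I)) ∧
      (Monotone fun k => (E k : Set I)) ∧ (∀ k, (F (k + 1) : Set I) ⊆ ↑(F k) ∪ (↑(E k))ᶜ) ∧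
      ∀ k : ℕ, y k ∈ span ℝ (f '' F (k + 1)) ∧ y k ≠ 0 ∧
        besselSum f (F (k + 1)) (y k) < 16 * (1 / (k + 1)) * ‖y k‖ ^ 2 ∧
        besselSum f (↑(E (k + 1)))ᶜ (y k) < 1 / (k + 1) * ‖y k‖ ^ 2 := by
  classical
  choose F' E' y hF hE hFE hy using fun (k : ℕ) (s : Finset I × Finset I) =>
    hf.exists_extend_of_besselSum_lt (by positivity)
      (hbad (1 / (k + 1)) (by positivity) s.1 (s.1 ∪ s.2) Finset.subset_union_left)
  let s : ℕ → Finset I × Finset I := fun k => Nat.rec (∅, ∅) (fun k p => (F' k p, E' k p)) k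
  exact ⟨fun k => (s k).1, fun k => (s k).2, fun k => y k (s k),
    monotone_nat_of_le_succ fun k => Finset.coe_subset.mpr (hF k (s k)),
    monotone_nat_of_le_succ fun k => Finset.coe_subset.mpr (hE k (s k)),
    fun k => hFE k (s k), fun k => hy k (s k)⟩

end IsFrameFor

end Bessel

theorem stmt_2_general {H : Type*} [NormedAddCommGroup H] [InnerProductSpace ℝ H]
    {I : Type*} (f : I → H)
    (hframe : IsFrameFor f (Set.univ : Set H))
    (hsub : ∀ J : Set I, IsFrameFor (fun i : J => f (i : I))
      ((Submodule.span ℝ (f '' J)).topologicalClosure : Set H)) :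
    ∃ ε : ℝ, 0 < ε ∧ ∃ J J' : Finset I, J ⊆ J' ∧
      ∀ J'' : Set I, J'' ⊆ {i | i ∉ J'} →
        ∀ x ∈ (Submodule.span ℝ (f '' ((J : Set I) ∪ J''))).topologicalClosure,
          ε * ‖x‖ ^ 2 ≤ ∑' i : ((J : Set I) ∪ J'' : Set I), (inner ℝ x (f (i : I)) : ℝ) ^ 2 := by
  by_contra! hbad
  obtain ⟨F, E, y, hF, hE, hFE, hy⟩ := hframe.exists_seq_of_besselSum_lt hbad
  set Λ := ⋃ k, (F k : Set I)
  obtain ⟨A, _, hA, _, hΛ⟩ := hsub Λ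
  obtain ⟨k, hk⟩ := exists_nat_one_div_lt (show 0 < A / 17 by positivity)
  obtain ⟨hyF, hy0, hyF', hyE⟩ := hy k
  have hyΛ : y k ∈ (span ℝ (f '' Λ)).topologicalClosure :=
    le_topologicalClosure _ (span_mono (image_mono (subset_iUnion _ (k + 1))) hyF)
  have hlow : A * ‖y k‖ ^ 2 ≤ besselSum f Λ (y k) := (hΛ (y k) hyΛ).1
  have hup := besselSum_le_add_of_subset_union (iUnion_subset_union_compl hF hE hFE (k + 1))
    (hframe.summable (mem_univ (y k)))
  have hy2 : 0 < ‖y k‖ ^ 2 := pow_pos (norm_pos_iff.mpr hy0) 2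
  nlinarith [mul_lt_mul_of_pos_right hk hy2]

theorem stmt_2 {H : Type*} [NormedAddCommGroup H] [InnerProductSpace ℝ H]
    [CompleteSpace H] [TopologicalSpace.SeparableSpace H]
    {I : Type*} (f : I → H)
    (hframe : IsFrameFor f (Set.univ : Set H))
    (hsub : ∀ J : Set I, IsFrameFor (fun i : J => f (i : I))
      ((Submodule.span ℝ (f '' J)).topologicalClosure : Set H)) :
    ∃ ε : ℝ, 0 < ε ∧ ∃ J J' : Finset I, J ⊆ J' ∧
      ∀ J'' : Set I, J'' ⊆ {i | i ∉ J'} →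
        ∀ x ∈ (Submodule.span ℝ (f '' ((J : Set I) ∪ J''))).topologicalClosure,
          ε * ‖x‖ ^ 2 ≤ ∑' i : ((J : Set I) ∪ J'' : Set I), (inner ℝ x (f (i : I)) : ℝ) ^ 2 :=
  stmt_2_general f hframe hsub
end

section
/- Let {f_i}_{i∈I} be a family in a Hilbert space H, let J, J′ be finite subsets of I with J ⊆ J′, let ε > 0, and suppose that for every J″ ⊆ I∖J′ the family {f_i}_{i∈J∪J″} has lower frame bound ≥ ε for its closed linear span. Let P be the orthogonal projection of H onto span{f_i}_{i∈J}. Then for every J″ ⊆ I∖J′, the family {(I−P)f_i}_{i∈J″} has lower frame bound ≥ ε for its closed linear span, i.e., ε‖f‖² ≤ ∑_{i∈J″} |⟨f, (I−P)f_i⟩|² for all f in the closed linear span of {(I−P)f_i}_{i∈J″}. -/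
/-!
Every `(I - P) f i` lies in `Kᗮ`, where `K = span {f i}_{i ∈ J}`, so a vector `x` in the closed
span of these vectors is orthogonal to every `f j` with `j ∈ J` and to `P f i`. Hence
`⟪x, (I - P) f i⟫ = ⟪x, f i⟫`, the terms indexed by `J` of the frame sum over `J ∪ J''` vanish,
and since `(I - P) f i ∈ span {f j}_{j ∈ J ∪ J''}` the lower frame bound for `J ∪ J''` applies to `x`.
-/

namespace Submodule

variable {𝕜 E ι : Type*} [RCLike 𝕜] [NormedAddCommGroup E] [InnerProductSpace 𝕜 E]

theorem topologicalClosure_span_image_sub_orthogonalProjectionOnto_le_orthogonal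
    (K : Submodule 𝕜 E) [K.HasOrthogonalProjection] (f : ι → E) (S : Set ι) :
    (span 𝕜 ((fun i => f i - (K.orthogonalProjectionOnto (f i) : E)) '' S)).topologicalClosure
      ≤ Kᗮ := by
  refine topologicalClosure_minimal _ ?_ K.isClosed_orthogonal
  rw [span_le]
  rintro _ ⟨i, -, rfl⟩
  exact K.sub_starProjection_mem_orthogonal (f i)

theorem span_image_sub_orthogonalProjectionOnto_le_span_union
    (f : ι → E) (T S : Set ι) [(span 𝕜 (f '' T)).HasOrthogonalProjection] :
    span 𝕜 ((fun i => f i - ((span 𝕜 (f '' T)).orthogonalProjectionOnto (f i) : E)) '' S)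
      ≤ span 𝕜 (f '' (T ∪ S)) := by
  rw [span_le]
  rintro _ ⟨i, hi, rfl⟩
  have hT : span 𝕜 (f '' T) ≤ span 𝕜 (f '' (T ∪ S)) :=
    span_mono (Set.image_mono Set.subset_union_left)
  exact sub_mem (subset_span ⟨i, Or.inr hi, rfl⟩) (hT (coe_mem _))

theorem inner_sub_orthogonalProjectionOnto_of_mem_orthogonal
    (K : Submodule 𝕜 E) [K.HasOrthogonalProjection] {x : E} (hx : x ∈ Kᗮ) (v : E) :
    inner 𝕜 x (v - (K.orthogonalProjectionOnto v : E)) = inner 𝕜 x v := by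
  rw [inner_sub_right, inner_left_of_mem_orthogonal (coe_mem _) hx, sub_zero]

end Submodule

theorem stmt_4_general {H : Type*} [NormedAddCommGroup H] [InnerProductSpace ℝ H]
    {I : Type*} (f : I → H) (J J' : Finset I)
    (ε : ℝ)
    -- for every `J'' ⊆ I \ J'`, the family `{f i}_{i ∈ J ∪ J''}` has lower frame
    -- bound `≥ ε` for its closed linear span
    (hlow : ∀ J'' : Set I, J'' ⊆ {i | i ∉ J'} →
      ∀ x ∈ (Submodule.span ℝ (f '' ((J : Set I) ∪ J''))).topologicalClosure,
        ε * ‖x‖ ^ 2 ≤ ∑' i : ((J : Set I) ∪ J'' : Set I), (inner ℝ x (f (i : I)) : ℝ) ^ 2) :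
    -- with `P` the orthogonal projection onto `span {f i}_{i ∈ J}`, for every
    -- `J'' ⊆ I \ J'` the family `{(1-P) f i}_{i ∈ J''}` has lower frame bound `≥ ε`
    -- for its closed linear span
    ∀ J'' : Set I, J'' ⊆ {i | i ∉ J'} →
      haveI : FiniteDimensional ℝ (Submodule.span ℝ (f '' (J : Set I))) :=
        FiniteDimensional.span_of_finite ℝ ((J : Set I).toFinite.image f)
      ∀ x ∈ (Submodule.span ℝ
          ((fun i => f i - (Submodule.orthogonalProjectionOnto (Submodule.span ℝ (f '' (J : Set I))) (f i) : H))
            '' J'')).topologicalClosure,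
        ε * ‖x‖ ^ 2 ≤ ∑' i : J'',
          (inner ℝ x (f (i : I) -
            (Submodule.orthogonalProjectionOnto (Submodule.span ℝ (f '' (J : Set I))) (f (i : I)) : H)) : ℝ) ^ 2 := by
  intro J'' hJ'' x hx
  set K := Submodule.span ℝ (f '' (J : Set I))
  have : FiniteDimensional ℝ K :=
    FiniteDimensional.span_of_finite ℝ ((J : Set I).toFinite.image f)
  have hxK : x ∈ Kᗮ :=
    K.topologicalClosure_span_image_sub_orthogonalProjectionOnto_le_orthogonal f J'' hx
  have hx' : x ∈ (Submodule.span ℝ (f '' ((J : Set I) ∪ J''))).topologicalClosure :=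
    Submodule.topologicalClosure_mono
      (Submodule.span_image_sub_orthogonalProjectionOnto_le_span_union f J J'') hx
  have hJ : ∀ i ∈ (J : Set I), (inner ℝ x (f i) : ℝ) ^ 2 = 0 := fun i hi => by
    rw [Submodule.inner_left_of_mem_orthogonal
      (Submodule.subset_span (Set.mem_image_of_mem f hi)) hxK, sq, mul_zero]
  calc ε * ‖x‖ ^ 2 ≤ ∑' i : ((J : Set I) ∪ J'' : Set I), (inner ℝ x (f i) : ℝ) ^ 2 :=
        hlow J'' hJ'' x hx'
    _ = ∑' i : J'', (inner ℝ x (f i) : ℝ) ^ 2 := by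
        rw [tsum_setElem_eq_tsum_setElem_sdiff _ _ hJ, Set.union_sdiff_left,
          ← tsum_setElem_eq_tsum_setElem_sdiff _ _ hJ]
    _ = _ := tsum_congr fun i => by
        rw [K.inner_sub_orthogonalProjectionOnto_of_mem_orthogonal hxK]

theorem stmt_4 {H : Type*} [NormedAddCommGroup H] [InnerProductSpace ℝ H]
    [CompleteSpace H]
    {I : Type*} (f : I → H) (J J' : Finset I) (hJJ' : J ⊆ J')
    (ε : ℝ) (hε : 0 < ε)
    -- for every `J'' ⊆ I \ J'`, the family `{f i}_{i ∈ J ∪ J''}` has lower frame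
    -- bound `≥ ε` for its closed linear span
    (hlow : ∀ J'' : Set I, J'' ⊆ {i | i ∉ J'} →
      ∀ x ∈ (Submodule.span ℝ (f '' ((J : Set I) ∪ J''))).topologicalClosure,
        ε * ‖x‖ ^ 2 ≤ ∑' i : ((J : Set I) ∪ J'' : Set I), (inner ℝ x (f (i : I)) : ℝ) ^ 2) :
    -- with `P` the orthogonal projection onto `span {f i}_{i ∈ J}`, for every
    -- `J'' ⊆ I \ J'` the family `{(1-P) f i}_{i ∈ J''}` has lower frame bound `≥ ε`
    -- for its closed linear span
    ∀ J'' : Set I, J'' ⊆ {i | i ∉ J'} →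
      haveI : FiniteDimensional ℝ (Submodule.span ℝ (f '' (J : Set I))) :=
        FiniteDimensional.span_of_finite ℝ ((J : Set I).toFinite.image f)
      ∀ x ∈ (Submodule.span ℝ
          ((fun i => f i - (Submodule.orthogonalProjectionOnto (Submodule.span ℝ (f '' (J : Set I))) (f i) : H))
            '' J'')).topologicalClosure,
        ε * ‖x‖ ^ 2 ≤ ∑' i : J'',
          (inner ℝ x (f (i : I) -
            (Submodule.orthogonalProjectionOnto (Submodule.span ℝ (f '' (J : Set I))) (f (i : I)) : H)) : ℝ) ^ 2 :=
  stmt_4_general f J J' ε hlow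
end

section
/- Let {f_i}_{i∈I} be a family in a separable Hilbert space H. Then {f_i}_{i∈I} is a Riesz basis for H if and only if {f_i}_{i∈I} is a frame for H and is ω-independent, i.e., whenever ∑_{i∈I} c_i f_i = 0 for a scalar sequence {c_i}, then c_i = 0 for all i. -/
/-!
Everything is read off the synthesis operator `T : ℓ²(I) → H`, `a ↦ ∑ aᵢ fᵢ`, which exists as
soon as either side holds (for a frame, Cauchy–Schwarz turns the upper frame bound into the upper
Riesz bound). The frame sum `∑ ⟨x, fᵢ⟩²` is `‖T† x‖²`, so `f` is a frame iff `T†` is bounded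
below, i.e. iff `T` is onto. For a Riesz basis `T` is bounded below, so its range is closed, and
it is dense. Conversely, ω-independence makes `T` injective, hence bijective, and the open mapping
theorem gives the lower Riesz bound. The lower Riesz bound in turn forces the coefficients of any
convergent `∑ cᵢ fᵢ = 0` to vanish.
-/

open scoped BigOperators

open scoped lp InnerProduct RealInnerProductSpace

namespace ContinuousLinearMap

lemma sq_norm_apply_le {E F : Type*} [NormedAddCommGroup E] [NormedSpace ℝ E]
    [NormedAddCommGroup F] [NormedSpace ℝ F] (T : E →L[ℝ] F) (x : E) :
    ‖T x‖ ^ 2 ≤ (‖T‖ ^ 2 + 1) * ‖x‖ ^ 2 := calc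
  ‖T x‖ ^ 2 ≤ (‖T‖ * ‖x‖) ^ 2 := by gcongr; exact T.le_opNorm x
  _ ≤ (‖T‖ ^ 2 + 1) * ‖x‖ ^ 2 := by nlinarith [sq_nonneg ‖x‖]

variable {E F : Type*} [NormedAddCommGroup E] [InnerProductSpace ℝ E] [CompleteSpace E]
  [NormedAddCommGroup F] [InnerProductSpace ℝ F] [CompleteSpace F]

theorem surjective_of_sq_norm_adjoint_ge (T : E →L[ℝ] F) {A : ℝ} (hA : 0 < A)
    (h : ∀ y, A * ‖y‖ ^ 2 ≤ ‖(T†) y‖ ^ 2) : Function.Surjective T := by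
  set S := T ∘L T†
  -- `S` is coercive, so Lax–Milgram makes it onto.
  have hS : IsCoercive ((innerSL ℝ) ∘L S) :=
    ⟨A, hA, fun y => calc
      A * ‖y‖ * ‖y‖ ≤ ‖(T†) y‖ ^ 2 := by rw [mul_assoc, ← sq]; exact h y
      _ = ⟪T ((T†) y), y⟫ := by rw [← adjoint_inner_right, real_inner_self_eq_norm_sq]⟩
  have hS_eq : InnerProductSpace.continuousLinearMapOfBilin ((innerSL ℝ) ∘L S) = S := by
    ext y
    exact ext_inner_right ℝ fun z => InnerProductSpace.continuousLinearMapOfBilin_apply _ y z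
  intro y
  obtain ⟨x, hx⟩ := LinearMap.range_eq_top.1 hS.range_eq_top y
  exact ⟨(T†) x, by rwa [hS_eq] at hx⟩

theorem exists_sq_norm_adjoint_ge_of_surjective (T : E →L[ℝ] F) (hT : Function.Surjective T) :
    ∃ A > 0, ∀ y, A * ‖y‖ ^ 2 ≤ ‖(T†) y‖ ^ 2 := by
  obtain ⟨C, hC, hpre⟩ := T.exists_preimage_norm_le hT
  refine ⟨(C ^ 2)⁻¹, by positivity, fun y => ?_⟩
  obtain ⟨x, rfl, hx⟩ := hpre y
  have key : ‖T x‖ ≤ C * ‖(T†) (T x)‖ := by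
    have : ‖T x‖ ^ 2 ≤ C * ‖T x‖ * ‖(T†) (T x)‖ := calc
      ‖T x‖ ^ 2 = ⟪x, (T†) (T x)⟫ := by rw [adjoint_inner_right, real_inner_self_eq_norm_sq]
      _ ≤ ‖x‖ * ‖(T†) (T x)‖ := real_inner_le_norm _ _
      _ ≤ C * ‖T x‖ * ‖(T†) (T x)‖ := by gcongr
    rcases (norm_nonneg (T x)).eq_or_lt with h0 | hpos
    · rw [← h0]; positivity
    · nlinarith
  rw [inv_mul_le_iff₀ (by positivity)]
  calc ‖T x‖ ^ 2 ≤ (C * ‖(T†) (T x)‖) ^ 2 := by gcongr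
    _ = C ^ 2 * ‖(T†) (T x)‖ ^ 2 := by ring

end ContinuousLinearMap

section

variable {H : Type*} [NormedAddCommGroup H] [InnerProductSpace ℝ H] {I : Type*}

lemma lp.hasSum_sq_norm (a : ℓ²(I, ℝ)) : HasSum (fun i => a i ^ 2) (‖a‖ ^ 2) := by
  simpa [Real.rpow_two] using lp.hasSum_norm (p := 2) (by norm_num) a

lemma lp.norm_sq_sum_single [DecidableEq I] (s : Finset I) (a : I → ℝ) :
    ‖∑ i ∈ s, lp.single 2 i (a i)‖ ^ 2 = ∑ i ∈ s, a i ^ 2 := by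
  simpa [Real.rpow_two] using lp.norm_sum_single (p := 2) (by norm_num) a s

def IsFrame (f : I → H) : Prop :=
  ∃ A B : ℝ, 0 < A ∧ 0 < B ∧ ∀ x : H,
    A * ‖x‖ ^ 2 ≤ ∑' i, (inner ℝ x (f i) : ℝ) ^ 2 ∧
    ∑' i, (inner ℝ x (f i) : ℝ) ^ 2 ≤ B * ‖x‖ ^ 2

def IsOmegaIndependent (f : I → H) : Prop :=
  ∀ c : I → ℝ, HasSum (fun i => c i • f i) 0 → ∀ i, c i = 0

def IsSynthesisOperator (f : I → H) (T : ℓ²(I, ℝ) →L[ℝ] H) : Prop :=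
  ∀ a : ℓ²(I, ℝ), HasSum (fun i => a i • f i) (T a)

lemma summable_smul_of_sq_norm_sum_le [CompleteSpace H] {f : I → H} {C : ℝ} (hC0 : 0 ≤ C)
    (hC : ∀ (s : Finset I) (a : I → ℝ), ‖∑ i ∈ s, a i • f i‖ ^ 2 ≤ C * ∑ i ∈ s, a i ^ 2)
    (a : ℓ²(I, ℝ)) : Summable fun i => a i • f i := by
  rw [summable_iff_vanishing_norm]
  intro ε hε
  obtain ⟨s, hs⟩ := summable_iff_vanishing_norm.1 (lp.hasSum_sq_norm a).summable
    (ε ^ 2 / (C + 1)) (by positivity)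
  refine ⟨s, fun t ht => ?_⟩
  have htail := hs t ht
  rw [Real.norm_of_nonneg (Finset.sum_nonneg fun i _ => sq_nonneg _),
    lt_div_iff₀ (by positivity)] at htail
  have : ‖∑ i ∈ t, a i • f i‖ ^ 2 < ε ^ 2 := calc
    _ ≤ C * ∑ i ∈ t, a i ^ 2 := hC t a
    _ ≤ (∑ i ∈ t, a i ^ 2) * (C + 1) := by
      nlinarith [Finset.sum_nonneg fun i (_ : i ∈ t) => sq_nonneg (a i)]
    _ < ε ^ 2 := htail
  exact (pow_lt_pow_iff_left₀ (norm_nonneg _) hε.le two_ne_zero).1 this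

lemma exists_isSynthesisOperator [CompleteSpace H] {f : I → H} {C : ℝ} (hC0 : 0 ≤ C)
    (hC : ∀ (s : Finset I) (a : I → ℝ), ‖∑ i ∈ s, a i • f i‖ ^ 2 ≤ C * ∑ i ∈ s, a i ^ 2) :
    ∃ T, IsSynthesisOperator f T := by
  have hsum := summable_smul_of_sq_norm_sum_le hC0 hC
  let L : ℓ²(I, ℝ) →ₗ[ℝ] H :=
    { toFun := fun a => ∑' i, a i • f i
      map_add' := fun a b => by
        simp only [lp.coeFn_add, Pi.add_apply, add_smul]
        exact (hsum a).tsum_add (hsum b)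
      map_smul' := fun r a => by
        simp only [lp.coeFn_smul, Pi.smul_apply, smul_eq_mul, mul_smul]
        exact (hsum a).tsum_const_smul r }
  have hbound : ∀ a, ‖L a‖ ≤ √C * ‖a‖ := fun a => by
    have : ‖L a‖ ^ 2 ≤ C * ‖a‖ ^ 2 :=
      le_of_tendsto ((hsum a).hasSum.norm.pow 2) <| Filter.Eventually.of_forall fun s =>
        (hC s a).trans <| by
          gcongr
          exact sum_le_hasSum s (fun i _ => sq_nonneg _) (lp.hasSum_sq_norm a)
    rwa [← pow_le_pow_iff_left₀ (norm_nonneg _) (by positivity) two_ne_zero, mul_pow,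
      Real.sq_sqrt hC0]
  exact ⟨L.mkContinuous √C hbound, fun a => (hsum a).hasSum⟩

namespace IsSynthesisOperator

variable {f : I → H} {T : ℓ²(I, ℝ) →L[ℝ] H} (hT : IsSynthesisOperator f T)
include hT

lemma apply_single [DecidableEq I] (i : I) (r : ℝ) : T (lp.single 2 i r) = r • f i := by
  refine ((hT _).unique (hasSum_single i fun j hj => ?_)).trans (by simp)
  simp [lp.single_apply, hj]

lemma apply_sum_single [DecidableEq I] (s : Finset I) (a : I → ℝ) :
    T (∑ i ∈ s, lp.single 2 i (a i)) = ∑ i ∈ s, a i • f i := by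
  simp [map_sum, hT.apply_single]

lemma mem_topologicalClosure_span (a : ℓ²(I, ℝ)) :
    T a ∈ (Submodule.span ℝ (Set.range f)).topologicalClosure :=
  mem_closure_of_tendsto (hT a) <| Filter.Eventually.of_forall fun _ =>
    Submodule.sum_mem _ fun i _ => Submodule.smul_mem _ _ (Submodule.subset_span ⟨i, rfl⟩)

lemma sq_norm_apply_ge {c : ℝ}
    (hc : ∀ (s : Finset I) (a : I → ℝ), c * ∑ i ∈ s, a i ^ 2 ≤ ‖∑ i ∈ s, a i • f i‖ ^ 2)
    (a : ℓ²(I, ℝ)) : c * ‖a‖ ^ 2 ≤ ‖T a‖ ^ 2 := by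
  classical
  have hlim := lp.hasSum_single (p := 2) ENNReal.ofNat_ne_top a
  refine le_of_tendsto_of_tendsto' ((hlim.norm.pow 2).const_mul c)
    (((T.continuous.tendsto a).comp hlim).norm.pow 2) fun s => ?_
  simpa [lp.norm_sq_sum_single, hT.apply_sum_single] using hc s a

variable [CompleteSpace H]

lemma adjoint_apply (x : H) (i : I) : (T†) x i = ⟪x, f i⟫ := by
  classical
  calc (T†) x i = ⟪lp.single 2 i (1 : ℝ), (T†) x⟫ := by simp [lp.inner_single_left]
    _ = ⟪x, f i⟫ := by
      rw [ContinuousLinearMap.adjoint_inner_right, hT.apply_single, one_smul, real_inner_comm]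

lemma hasSum_inner_sq (x : H) : HasSum (fun i => ⟪x, f i⟫ ^ 2) (‖(T†) x‖ ^ 2) := by
  simpa [hT.adjoint_apply] using lp.hasSum_sq_norm ((T†) x)

lemma isFrame_iff_surjective : IsFrame f ↔ Function.Surjective T := by
  have hsum (x : H) : ∑' i, ⟪x, f i⟫ ^ 2 = ‖(T†) x‖ ^ 2 := (hT.hasSum_inner_sq x).tsum_eq
  constructor
  · rintro ⟨A, B, hA, -, hAB⟩
    exact T.surjective_of_sq_norm_adjoint_ge hA fun y => hsum y ▸ (hAB y).1
  · intro hsurj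
    obtain ⟨A, hA, hAy⟩ := T.exists_sq_norm_adjoint_ge_of_surjective hsurj
    exact ⟨A, ‖T†‖ ^ 2 + 1, hA, by positivity, fun x =>
      hsum x ▸ ⟨hAy x, (T†).sq_norm_apply_le x⟩⟩

lemma isRieszBasis_of_bijective (hbij : Function.Bijective T) : IsRieszBasis f := by
  classical
  obtain ⟨K, hK, hpre⟩ := T.exists_preimage_norm_le hbij.2
  have hbelow (a : ℓ²(I, ℝ)) : ‖a‖ ≤ K * ‖T a‖ := by
    obtain ⟨b, hb, hbK⟩ := hpre (T a)
    rwa [hbij.1 hb] at hbK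
  refine ⟨eq_top_iff.2 fun x _ => ?_, (K ^ 2)⁻¹, ‖T‖ ^ 2 + 1, by positivity, by positivity,
    fun s a => ?_⟩
  · obtain ⟨a, rfl⟩ := hbij.2 x
    exact hT.mem_topologicalClosure_span a
  · rw [← lp.norm_sq_sum_single, ← hT.apply_sum_single, inv_mul_le_iff₀ (by positivity),
      ← mul_pow]
    exact ⟨by gcongr; exact hbelow _, T.sq_norm_apply_le _⟩

end IsSynthesisOperator

lemma IsOmegaIndependent.injective {f : I → H} (hf : IsOmegaIndependent f)
    {T : ℓ²(I, ℝ) →L[ℝ] H} (hT : IsSynthesisOperator f T) : Function.Injective T := by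
  refine (injective_iff_map_eq_zero T).2 fun a ha => lp.ext <| funext fun i => ?_
  exact hf a (ha ▸ hT a) i

namespace IsRieszBasis

variable {f : I → H} (hf : IsRieszBasis f)
include hf

lemma isOmegaIndependent : IsOmegaIndependent f := by
  obtain ⟨_, b, _, hb, _, hbd⟩ := hf
  intro c hc i
  have hlim := hc.norm.pow 2
  rw [norm_zero, zero_pow two_ne_zero] at hlim
  have : b * c i ^ 2 ≤ 0 := ge_of_tendsto hlim <| by
    filter_upwards [Filter.eventually_ge_atTop {i}] with s hs
    calc b * c i ^ 2 ≤ b * ∑ j ∈ s, c j ^ 2 := by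
          gcongr
          exact Finset.single_le_sum (fun j _ => sq_nonneg (c j)) (hs (Finset.mem_singleton_self i))
      _ ≤ _ := (hbd s c).1
  exact pow_eq_zero_iff two_ne_zero |>.1 (by nlinarith [sq_nonneg (c i)])

lemma surjective {T : ℓ²(I, ℝ) →L[ℝ] H} (hT : IsSynthesisOperator f T) :
    Function.Surjective T := by
  obtain ⟨hdense, c, _, hc, _, hbd⟩ := hf
  have hbelow (a : ℓ²(I, ℝ)) : ‖a‖ ≤ (√c)⁻¹ * ‖T a‖ := by
    rw [le_inv_mul_iff₀ (by positivity), ← pow_le_pow_iff_left₀ (by positivity) (norm_nonneg _)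
      two_ne_zero, mul_pow, Real.sq_sqrt hc.le]
    exact hT.sq_norm_apply_ge (fun s a => (hbd s a).1) a
  have hclosed : IsClosed (Set.range T) :=
    (T.antilipschitz_of_bound (K := ⟨(√c)⁻¹, by positivity⟩) hbelow).isClosed_range
      T.uniformContinuous
  have hspan : Submodule.span ℝ (Set.range f) ≤ LinearMap.range (T : ℓ²(I, ℝ) →ₗ[ℝ] H) := by
    classical
    rw [Submodule.span_le]
    rintro _ ⟨i, rfl⟩
    exact ⟨lp.single 2 i 1, by simp [hT.apply_single]⟩
  refine LinearMap.range_eq_top.1 (eq_top_iff.2 ?_)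
  rw [← hdense]
  exact Submodule.topologicalClosure_minimal _ hspan (by rwa [LinearMap.coe_range])

lemma exists_isSynthesisOperator [CompleteSpace H] : ∃ T, IsSynthesisOperator f T := by
  obtain ⟨_, _, C, _, hC, hbd⟩ := hf
  exact _root_.exists_isSynthesisOperator hC.le fun s a => (hbd s a).2

end IsRieszBasis

namespace IsFrame

variable {f : I → H} (hf : IsFrame f)
include hf

lemma sq_norm_sum_smul_le : ∃ B > 0, ∀ (s : Finset I) (a : I → ℝ),
    ‖∑ i ∈ s, a i • f i‖ ^ 2 ≤ B * ∑ i ∈ s, a i ^ 2 := by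
  obtain ⟨A, B, hA, hB, hAB⟩ := hf
  have hsummable (x : H) : Summable fun i => ⟪x, f i⟫ ^ 2 := by
    by_contra hns
    have hx : A * ‖x‖ ^ 2 ≤ 0 := tsum_eq_zero_of_not_summable hns ▸ (hAB x).1
    obtain rfl : x = 0 :=
      norm_eq_zero.1 (pow_eq_zero_iff two_ne_zero |>.1 (by nlinarith [sq_nonneg ‖x‖]))
    exact hns (by simp)
  refine ⟨B, hB, fun s a => ?_⟩
  set x := ∑ i ∈ s, a i • f i with hxdef
  have hx : ‖x‖ ^ 2 = ∑ i ∈ s, a i * ⟪x, f i⟫ := calc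
    ‖x‖ ^ 2 = ⟪x, ∑ i ∈ s, a i • f i⟫ := (real_inner_self_eq_norm_sq x).symm
    _ = ∑ i ∈ s, a i * ⟪x, f i⟫ := by simp [inner_sum, real_inner_smul_right]
  have hbessel : ∑ i ∈ s, ⟪x, f i⟫ ^ 2 ≤ B * ‖x‖ ^ 2 :=
    ((hsummable x).sum_le_tsum s fun i _ => sq_nonneg _).trans (hAB x).2
  have hcs := Finset.sum_mul_sq_le_sq_mul_sq s a fun i => ⟪x, f i⟫
  rw [← hx] at hcs
  rcases (sq_nonneg ‖x‖).eq_or_lt with h0 | hpos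
  · rw [← h0]; positivity
  · nlinarith [Finset.sum_nonneg fun i (_ : i ∈ s) => sq_nonneg (a i)]

lemma exists_isSynthesisOperator [CompleteSpace H] : ∃ T, IsSynthesisOperator f T := by
  obtain ⟨B, hB, hbd⟩ := hf.sq_norm_sum_smul_le
  exact _root_.exists_isSynthesisOperator hB.le hbd

end IsFrame

theorem isRieszBasis_iff_isFrame_and_isOmegaIndependent [CompleteSpace H] (f : I → H) :
    IsRieszBasis f ↔ IsFrame f ∧ IsOmegaIndependent f := by
  constructor
  · intro hf
    obtain ⟨T, hT⟩ := hf.exists_isSynthesisOperator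
    exact ⟨hT.isFrame_iff_surjective.2 (hf.surjective hT), hf.isOmegaIndependent⟩
  · rintro ⟨hframe, hω⟩
    obtain ⟨T, hT⟩ := hframe.exists_isSynthesisOperator
    exact hT.isRieszBasis_of_bijective ⟨hω.injective hT, hT.isFrame_iff_surjective.1 hframe⟩

end

theorem stmt_14_general {H : Type*} [NormedAddCommGroup H] [InnerProductSpace ℝ H]
    [CompleteSpace H]
    {I : Type*} (f : I → H) :
    IsRieszBasis f ↔
      -- `f` is a frame for `H` ...
      ((∃ A B : ℝ, 0 < A ∧ 0 < B ∧ ∀ x : H,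
        A * ‖x‖ ^ 2 ≤ ∑' i, (inner ℝ x (f i) : ℝ) ^ 2 ∧
        ∑' i, (inner ℝ x (f i) : ℝ) ^ 2 ≤ B * ‖x‖ ^ 2) ∧
      -- ... and `f` is ω-independent
      (∀ c : I → ℝ, HasSum (fun i => c i • f i) 0 → ∀ i, c i = 0)) :=
  isRieszBasis_iff_isFrame_and_isOmegaIndependent f

theorem stmt_14 {H : Type*} [NormedAddCommGroup H] [InnerProductSpace ℝ H]
    [CompleteSpace H] [TopologicalSpace.SeparableSpace H]
    {I : Type*} (f : I → H) :
    IsRieszBasis f ↔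
      -- `f` is a frame for `H` ...
      ((∃ A B : ℝ, 0 < A ∧ 0 < B ∧ ∀ x : H,
        A * ‖x‖ ^ 2 ≤ ∑' i, (inner ℝ x (f i) : ℝ) ^ 2 ∧
        ∑' i, (inner ℝ x (f i) : ℝ) ^ 2 ≤ B * ‖x‖ ^ 2) ∧
      -- ... and `f` is ω-independent
      (∀ c : I → ℝ, HasSum (fun i => c i • f i) 0 → ∀ i, c i = 0)) :=
  stmt_14_general f
end

section
/- Let {e_i}_{i=1}^∞ be an orthonormal basis for a separable Hilbert space H, let I, J ⊆ {2, 3, …} with I ∩ J ≠ ∅, and let {f_i}_{i∈L} denote the family consisting of e_i for i ∈ I together with e_i + 2^{−i}e_1 for i ∈ J. Then the synthesis operator T : ℓ²(L) → closure(span{f_i}_{i∈L}), T{c_i} = ∑_{i∈L} c_i f_i, is well defined, bounded, and surjective; consequently {f_i}_{i∈L} is a frame for its closed linear span, which equals the closed span of {e_1} ∪ {e_i}_{i∈I∪J}. -/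
/-!
The family is the orthonormal system `{e_i}_{i ∈ I} ∪ {e_j}_{j ∈ J}` perturbed by the
square-summable multiples `2^{-j} e_1`, so it is a Bessel sequence: its analysis operator
`x ↦ (⟪x, f_l⟫)_l` is bounded and its adjoint is the synthesis operator `T`.
For `k ∈ I ∩ J` we have `e_1 = 2^k (f_{inr k} - f_{inl k})`; this gives the closed-span identity,
and together with Parseval for the orthonormal basis `{e_n}_{n ∈ {1} ∪ I ∪ J}` of that span it
gives a lower frame bound. The lower frame bound makes `(v, w) ↦ ⟪T* v, T* w⟫` a coercive form
on the closed span, and Lax–Milgram then shows that `T` maps onto it.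
-/

open scoped BigOperators

open scoped InnerProductSpace lp
open Submodule Set

section HilbertSpace

variable {ι E F : Type*} [NormedAddCommGroup E] [InnerProductSpace ℝ E] [CompleteSpace E]
  [NormedAddCommGroup F] [InnerProductSpace ℝ F] [CompleteSpace F]

theorem ContinuousLinearMap.le_range_of_adjoint_bounded_below (T : E →L[ℝ] F)
    (V : Submodule ℝ F) [CompleteSpace V] (hTV : ∀ c, T c ∈ V) {A : ℝ} (hA : 0 < A)
    (hlow : ∀ x ∈ V, A * ‖x‖ ^ 2 ≤ ‖T.adjoint x‖ ^ 2) :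
    V ≤ T.range := by
  set S : V →L[ℝ] E := T.adjoint ∘L V.subtypeL
  have hS : IsCoercive ((innerSL ℝ).bilinearComp S S) :=
    ⟨A, hA, fun v => by simpa [S, sq, mul_assoc] using hlow v v.2⟩
  intro x hx
  set v := hS.continuousLinearEquivOfBilin.symm ⟨x, hx⟩
  have hperp : ∀ w : V, ⟪T (S v) - x, w⟫_ℝ = 0 := fun w => by
    have := hS.continuousLinearEquivOfBilin_apply v w
    simp only [v, ContinuousLinearEquiv.apply_symm_apply] at this
    rw [inner_sub_left, ← T.adjoint_inner_right]
    simpa [S, sub_eq_zero] using this.symm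
  refine ⟨S v, sub_eq_zero.mp ((inner_self_eq_zero (𝕜 := ℝ)).mp ?_)⟩
  exact hperp ⟨T (S v) - x, V.sub_mem (hTV _) hx⟩

theorem Orthonormal.hasSum_inner_sq_of_mem_closure {v : ι → E} (hv : Orthonormal ℝ v) {x : E}
    (hx : x ∈ (span ℝ (range v)).topologicalClosure) :
    HasSum (fun i => ⟪x, v i⟫_ℝ ^ 2) (‖x‖ ^ 2) := by
  set W := (span ℝ (range v)).topologicalClosure
  let w : ι → W := fun i => ⟨v i, le_topologicalClosure _ (subset_span ⟨i, rfl⟩)⟩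
  have hw : Orthonormal ℝ w := hv.codRestrict W _
  have hdense : ⊤ ≤ (span ℝ (range w)).topologicalClosure := by
    rintro y -
    have hmap : (span ℝ (range w)).map W.subtype = span ℝ (range v) := by
      rw [map_span, ← range_comp]
      rfl
    rw [← SetLike.mem_coe, topologicalClosure_coe,
      Topology.IsInducing.subtypeVal.closure_eq_preimage_closure_image]
    show (y : E) ∈ closure ((span ℝ (range w)).map W.subtype : Set E)
    rw [hmap, ← topologicalClosure_coe]
    exact y.2
  have := (HilbertBasis.mk hw hdense).hasSum_inner_mul_inner ⟨x, hx⟩ ⟨x, hx⟩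
  rw [HilbertBasis.coe_mk] at this
  simpa [w, real_inner_self_eq_norm_sq, real_inner_comm, sq] using this

end HilbertSpace

section BesselSequence

variable {ι κ E : Type*} [NormedAddCommGroup E] [InnerProductSpace ℝ E]

theorem lp.norm_sq_eq_tsum_sq (c : ℓ²(ι, ℝ)) : ‖c‖ ^ 2 = ∑' i, c i ^ 2 := by
  rw [← real_inner_self_eq_norm_sq, lp.inner_eq_tsum]
  simp only [Real.inner_apply, sq]

theorem memℓp_two_of_summable_sq {c : ι → ℝ} (hc : Summable fun i => c i ^ 2) : Memℓp c 2 :=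
  memℓp_gen <| by
    simpa only [ENNReal.toReal_ofNat, Real.rpow_two, Real.norm_eq_abs, sq_abs] using hc

theorem inner_add_sq_le (x u v : E) : ⟪x, u + v⟫_ℝ ^ 2 ≤ 2 * (⟪x, u⟫_ℝ ^ 2 + ⟪x, v⟫_ℝ ^ 2) := by
  rw [inner_add_right]
  exact add_sq_le

theorem summable_inner_add_sq {f g : ι → E} {x : E} (hf : Summable fun i => ⟪x, f i⟫_ℝ ^ 2)
    (hg : Summable fun i => ⟪x, g i⟫_ℝ ^ 2) : Summable fun i => ⟪x, f i + g i⟫_ℝ ^ 2 :=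
  ((hf.add hg).mul_left 2).of_nonneg_of_le (fun _ => sq_nonneg _) fun _ => inner_add_sq_le _ _ _

theorem tsum_inner_add_sq_le {f g : ι → E} {x : E} (hf : Summable fun i => ⟪x, f i⟫_ℝ ^ 2)
    (hg : Summable fun i => ⟪x, g i⟫_ℝ ^ 2) :
    ∑' i, ⟪x, f i + g i⟫_ℝ ^ 2 ≤ 2 * (∑' i, ⟪x, f i⟫_ℝ ^ 2 + ∑' i, ⟪x, g i⟫_ℝ ^ 2) := by
  rw [← hf.tsum_add hg, ← tsum_mul_left]
  exact (summable_inner_add_sq hf hg).tsum_le_tsum (fun i => inner_add_sq_le _ _ _)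
    ((hf.add hg).mul_left 2)

theorem tsum_inner_smul_sq (r : ι → ℝ) (x y : E) :
    ∑' i, ⟪x, r i • y⟫_ℝ ^ 2 = (∑' i, r i ^ 2) * ⟪x, y⟫_ℝ ^ 2 := by
  simp only [real_inner_smul_right, mul_pow, tsum_mul_right]

def IsBesselSeq (f : ι → E) (B : ℝ) : Prop :=
  ∀ x, Summable (fun i => ⟪x, f i⟫_ℝ ^ 2) ∧ ∑' i, ⟪x, f i⟫_ℝ ^ 2 ≤ B * ‖x‖ ^ 2

theorem Orthonormal.isBesselSeq {v : ι → E} (hv : Orthonormal ℝ v) : IsBesselSeq v 1 := by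
  intro x
  have h : ∀ i, ⟪x, v i⟫_ℝ ^ 2 = ‖⟪v i, x⟫_ℝ‖ ^ 2 := fun i => by
    rw [real_inner_comm, Real.norm_eq_abs, sq_abs]
  simp only [h, one_mul]
  exact ⟨hv.inner_products_summable x, hv.tsum_inner_products_le x⟩

theorem IsBesselSeq.sumElim {f : ι → E} {g : κ → E} {B C : ℝ} (hf : IsBesselSeq f B)
    (hg : IsBesselSeq g C) : IsBesselSeq (Sum.elim f g) (B + C) := by
  intro x
  obtain ⟨hfs, hfB⟩ := hf x
  obtain ⟨hgs, hgC⟩ := hg x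
  have hs : HasSum (fun l => ⟪x, Sum.elim f g l⟫_ℝ ^ 2)
      (∑' i, ⟪x, f i⟫_ℝ ^ 2 + ∑' i, ⟪x, g i⟫_ℝ ^ 2) :=
    HasSum.sum (f := fun l => ⟪x, Sum.elim f g l⟫_ℝ ^ 2) hfs.hasSum hgs.hasSum
  refine ⟨hs.summable, ?_⟩
  rw [hs.tsum_eq]
  linarith

theorem IsBesselSeq.add {f g : ι → E} {B C : ℝ} (hf : IsBesselSeq f B) (hg : IsBesselSeq g C) :
    IsBesselSeq (fun i => f i + g i) (2 * (B + C)) := fun x =>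
  ⟨summable_inner_add_sq (hf x).1 (hg x).1,
    by nlinarith [tsum_inner_add_sq_le (hf x).1 (hg x).1, (hf x).2, (hg x).2]⟩

theorem isBesselSeq_smul_const {r : ι → ℝ} (hr : Summable fun i => r i ^ 2) (y : E) :
    IsBesselSeq (fun i => r i • y) ((∑' i, r i ^ 2) * ‖y‖ ^ 2) := by
  intro x
  refine ⟨by simpa only [real_inner_smul_right, mul_pow] using hr.mul_right (⟪x, y⟫_ℝ ^ 2), ?_⟩
  rw [tsum_inner_smul_sq, mul_assoc]
  have hxy : ⟪x, y⟫_ℝ ^ 2 ≤ ‖y‖ ^ 2 * ‖x‖ ^ 2 := by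
    rw [← mul_pow, ← sq_abs, mul_comm]
    exact pow_le_pow_left₀ (abs_nonneg _) (abs_real_inner_le_norm x y) 2
  exact mul_le_mul_of_nonneg_left hxy (tsum_nonneg fun i => sq_nonneg (r i))

variable {f : ι → E} {B : ℝ}

noncomputable def IsBesselSeq.analysisOp (hf : IsBesselSeq f B) : E →L[ℝ] ℓ²(ι, ℝ) :=
  LinearMap.mkContinuous
    { toFun := fun x => ⟨fun i => ⟪x, f i⟫_ℝ, memℓp_two_of_summable_sq (hf x).1⟩
      map_add' := fun x y => lp.ext <| funext fun i => inner_add_left x y (f i)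
      map_smul' := fun r x => lp.ext <| funext fun i => real_inner_smul_left x (f i) r }
    √B fun x => by
      rw [← Real.sqrt_sq (norm_nonneg x), ← Real.sqrt_mul' _ (sq_nonneg _)]
      exact Real.le_sqrt_of_sq_le ((lp.norm_sq_eq_tsum_sq _).trans_le (hf x).2)

theorem IsBesselSeq.norm_analysisOp_sq (hf : IsBesselSeq f B) (x : E) :
    ‖hf.analysisOp x‖ ^ 2 = ∑' i, ⟪x, f i⟫_ℝ ^ 2 :=
  lp.norm_sq_eq_tsum_sq _

variable [CompleteSpace E]

noncomputable def IsBesselSeq.synthesisOp (hf : IsBesselSeq f B) : ℓ²(ι, ℝ) →L[ℝ] E :=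
  hf.analysisOp.adjoint

theorem IsBesselSeq.synthesisOp_single [DecidableEq ι] (hf : IsBesselSeq f B) (i : ι) :
    hf.synthesisOp (lp.single 2 i 1) = f i :=
  ext_inner_right ℝ fun x => by
    rw [synthesisOp, ContinuousLinearMap.adjoint_inner_left, lp.inner_single_left,
      Real.inner_apply, one_mul, real_inner_comm]
    rfl

theorem IsBesselSeq.hasSum_synthesisOp (hf : IsBesselSeq f B) (c : ℓ²(ι, ℝ)) :
    HasSum (fun i => c i • f i) (hf.synthesisOp c) := by
  classical
  convert (lp.hasSum_single ENNReal.ofNat_ne_top c).mapL hf.synthesisOp with i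
  rw [← hf.synthesisOp_single, ← map_smul, ← lp.single_smul, smul_eq_mul, mul_one]

theorem IsBesselSeq.synthesisOp_mem_closure_span (hf : IsBesselSeq f B) (c : ℓ²(ι, ℝ)) :
    hf.synthesisOp c ∈ (span ℝ (range f)).topologicalClosure := by
  rw [← (hf.hasSum_synthesisOp c).tsum_eq]
  exact tsum_mem (isClosed_topologicalClosure _) fun i =>
    le_topologicalClosure _ (smul_mem _ _ (subset_span ⟨i, rfl⟩))

theorem IsBesselSeq.range_synthesisOp {A : ℝ} (hf : IsBesselSeq f B) (hA : 0 < A)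
    (hlow : ∀ x ∈ (span ℝ (range f)).topologicalClosure, A * ‖x‖ ^ 2 ≤ ∑' i, ⟪x, f i⟫_ℝ ^ 2) :
    range hf.synthesisOp = (span ℝ (range f)).topologicalClosure := by
  refine (range_subset_iff.2 hf.synthesisOp_mem_closure_span).antisymm fun x hx => ?_
  refine hf.synthesisOp.le_range_of_adjoint_bounded_below _ hf.synthesisOp_mem_closure_span hA
    (fun y hy => ?_) hx
  rw [synthesisOp, ContinuousLinearMap.adjoint_adjoint, hf.norm_analysisOp_sq]
  exact hlow y hy

theorem IsBesselSeq.norm_sq_le_tsum_of_range_subset (hf : IsBesselSeq f B) {v : κ → E}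
    (hv : Orthonormal ℝ v) (hvf : range v ⊆ range f) {x : E}
    (hx : x ∈ (span ℝ (range v)).topologicalClosure) : ‖x‖ ^ 2 ≤ ∑' i, ⟪x, f i⟫_ℝ ^ 2 := by
  choose σ hσ using fun k => hvf ⟨k, rfl⟩
  have hσinj : Function.Injective σ := fun k l h => hv.linearIndependent.injective <| by
    rw [← hσ, ← hσ, h]
  rw [← (hv.hasSum_inner_sq_of_mem_closure hx).tsum_eq]
  simp only [← hσ]
  exact tsum_comp_le_tsum_of_inj (hf x).1 (fun i => sq_nonneg _) hσinj

end BesselSequence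

section PerturbedBasis

variable {H : Type*} [NormedAddCommGroup H] [InnerProductSpace ℝ H] {e : ℕ → H} {I J : Set ℕ}

variable (e I J) in
noncomputable def perturbedBasisFamily : I ⊕ J → H :=
  Sum.elim (fun i => e i) fun j => e j + ((2 : ℝ) ^ (j : ℕ))⁻¹ • e 1

theorem summable_inv_two_pow_sq : Summable fun j : J => ((2 : ℝ) ^ (j : ℕ))⁻¹ ^ 2 := by
  have h : Summable fun n : ℕ => ((1 : ℝ) / 4) ^ n :=
    summable_geometric_of_lt_one (by norm_num) (by norm_num)
  refine (h.comp_injective Subtype.val_injective).congr fun j => ?_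
  show ((1 : ℝ) / 4) ^ (j : ℕ) = _
  rw [one_div, inv_pow, inv_pow, ← pow_mul, mul_comm, pow_mul]
  norm_num

theorem isBesselSeq_perturbedBasisFamily (he : Orthonormal ℝ e) :
    IsBesselSeq (perturbedBasisFamily e I J)
      (1 + 2 * (1 + (∑' j : J, ((2 : ℝ) ^ (j : ℕ))⁻¹ ^ 2) * ‖e 1‖ ^ 2)) :=
  (he.comp _ Subtype.val_injective).isBesselSeq.sumElim <|
    (he.comp _ Subtype.val_injective).isBesselSeq.add
      (isBesselSeq_smul_const summable_inv_two_pow_sq (e 1))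

theorem e_one_mem_span_perturbedBasisFamily (hIJ : (I ∩ J).Nonempty) :
    e 1 ∈ span ℝ (range (perturbedBasisFamily e I J)) := by
  obtain ⟨k, hkI, hkJ⟩ := hIJ
  have he1 : e 1 = (2 : ℝ) ^ k • (perturbedBasisFamily e I J (.inr ⟨k, hkJ⟩) -
      perturbedBasisFamily e I J (.inl ⟨k, hkI⟩)) := by
    simp [perturbedBasisFamily, smul_smul]
  rw [he1]
  exact smul_mem _ _ (sub_mem (subset_span ⟨_, rfl⟩) (subset_span ⟨_, rfl⟩))

theorem span_range_perturbedBasisFamily (hIJ : (I ∩ J).Nonempty) :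
    span ℝ (range (perturbedBasisFamily e I J)) = span ℝ ({e 1} ∪ e '' (I ∪ J)) := by
  refine le_antisymm (span_le.2 ?_) (span_le.2 ?_)
  · rintro _ ⟨i | j, rfl⟩
    · exact subset_span (Or.inr ⟨i, Or.inl i.2, rfl⟩)
    · exact add_mem (subset_span (Or.inr ⟨j, Or.inr j.2, rfl⟩))
        (smul_mem _ _ (subset_span (Or.inl rfl)))
  · rintro _ (rfl | ⟨n, hn | hn, rfl⟩)
    · exact e_one_mem_span_perturbedBasisFamily hIJ
    · exact subset_span ⟨.inl ⟨n, hn⟩, rfl⟩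
    · have hen : e n = perturbedBasisFamily e I J (.inr ⟨n, hn⟩) - ((2 : ℝ) ^ n)⁻¹ • e 1 := by
        simp [perturbedBasisFamily]
      rw [SetLike.mem_coe, hen]
      exact sub_mem (subset_span ⟨_, rfl⟩) (smul_mem _ _ (e_one_mem_span_perturbedBasisFamily hIJ))

theorem norm_sq_le_of_mem_closure_span_union [CompleteSpace H] (he : Orthonormal ℝ e) {x : H}
    (hx : x ∈ (span ℝ ({e 1} ∪ e '' (I ∪ J))).topologicalClosure) :
    ‖x‖ ^ 2 ≤ ⟪x, e 1⟫_ℝ ^ 2 + ∑' i : I, ⟪x, e i⟫_ℝ ^ 2 + ∑' j : J, ⟪x, e j⟫_ℝ ^ 2 := by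
  -- `g` repeats the vectors `e n` with `n` in more than one of `{1}`, `I`, `J`,
  -- so Parseval only survives as an inequality
  let g : (Unit ⊕ I) ⊕ J → H := Sum.elim (Sum.elim (fun _ => e 1) fun i => e i) fun j => e j
  have hg : IsBesselSeq g (1 + 1 + 1) :=
    ((he.comp _ (Function.injective_of_subsingleton _)).isBesselSeq.sumElim
      (he.comp _ Subtype.val_injective).isBesselSeq).sumElim
      (he.comp _ Subtype.val_injective).isBesselSeq
  rw [← image_singleton, ← image_union, image_eq_range] at hx
  have hle := hg.norm_sq_le_tsum_of_range_subset (he.comp _ Subtype.val_injective) ?_ hx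
  · have hsum : HasSum (fun l => ⟪x, g l⟫_ℝ ^ 2)
        (⟪x, e 1⟫_ℝ ^ 2 + ∑' i : I, ⟪x, e i⟫_ℝ ^ 2 + ∑' j : J, ⟪x, e j⟫_ℝ ^ 2) :=
      HasSum.sum (f := fun l => ⟪x, g l⟫_ℝ ^ 2)
        (HasSum.sum (f := fun l => ⟪x, g (.inl l)⟫_ℝ ^ 2) (hasSum_unique _)
          ((he.comp _ Subtype.val_injective).isBesselSeq x).1.hasSum)
        ((he.comp _ Subtype.val_injective).isBesselSeq x).1.hasSum
    exact hle.trans_eq hsum.tsum_eq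
  · rintro _ ⟨⟨n, rfl | hn | hn⟩, rfl⟩
    · exact ⟨.inl (.inl ()), rfl⟩
    · exact ⟨.inl (.inr ⟨n, hn⟩), rfl⟩
    · exact ⟨.inr ⟨n, hn⟩, rfl⟩

theorem tsum_inner_sq_le_perturbedBasisFamily (he : Orthonormal ℝ e) (x : H) :
    ∑' j : J, ⟪x, e j⟫_ℝ ^ 2 ≤ 2 * (∑' j, ⟪x, perturbedBasisFamily e I J (.inr j)⟫_ℝ ^ 2 +
      (∑' j : J, ((2 : ℝ) ^ (j : ℕ))⁻¹ ^ 2) * ⟪x, e 1⟫_ℝ ^ 2) := by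
  have hF : ∀ j : J, e j =
      perturbedBasisFamily e I J (.inr j) + (-((2 : ℝ) ^ (j : ℕ))⁻¹) • e 1 := fun j => by
    simp [perturbedBasisFamily]
  have h := tsum_inner_add_sq_le (x := x)
    (f := fun j : J => perturbedBasisFamily e I J (.inr j))
    (g := fun j : J => (-((2 : ℝ) ^ (j : ℕ))⁻¹) • e 1)
    ((isBesselSeq_perturbedBasisFamily he x).1.comp_injective Sum.inr_injective)
    ((isBesselSeq_smul_const (by simpa only [neg_sq] using summable_inv_two_pow_sq) (e 1)) x).1
  rw [tsum_inner_smul_sq] at h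
  simpa only [neg_sq, ← hF] using h

theorem inner_e_one_sq_le_perturbedBasisFamily {k : ℕ} (hk : k ∈ I ∩ J) {x : H}
    (hx : Summable fun l => ⟪x, perturbedBasisFamily e I J l⟫_ℝ ^ 2) :
    ⟪x, e 1⟫_ℝ ^ 2 ≤ 2 * 4 ^ k * ∑' l, ⟪x, perturbedBasisFamily e I J l⟫_ℝ ^ 2 := by
  set u := ⟪x, perturbedBasisFamily e I J (.inl ⟨k, hk.1⟩)⟫_ℝ
  set w := ⟪x, perturbedBasisFamily e I J (.inr ⟨k, hk.2⟩)⟫_ℝ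
  have he1 : ⟪x, e 1⟫_ℝ = 2 ^ k * (w - u) := by
    simp [u, w, perturbedBasisFamily, inner_add_right, real_inner_smul_right]
  have huw : u ^ 2 + w ^ 2 ≤ ∑' l, ⟪x, perturbedBasisFamily e I J l⟫_ℝ ^ 2 := by
    have := hx.sum_le_tsum {.inl ⟨k, hk.1⟩, .inr ⟨k, hk.2⟩} (fun _ _ => sq_nonneg _)
    rwa [Finset.sum_pair Sum.inl_ne_inr] at this
  have h4k := pow_pos (by norm_num : (0 : ℝ) < 4) k
  calc ⟪x, e 1⟫_ℝ ^ 2 = 4 ^ k * (w - u) ^ 2 := by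
        rw [he1, mul_pow, ← pow_mul, pow_mul']
        norm_num
    _ ≤ 4 ^ k * (2 * (u ^ 2 + w ^ 2)) := by gcongr; nlinarith [sq_nonneg (w + u)]
    _ ≤ 2 * 4 ^ k * ∑' l, ⟪x, perturbedBasisFamily e I J l⟫_ℝ ^ 2 := by nlinarith

theorem exists_lower_frame_bound_perturbedBasisFamily [CompleteSpace H] (he : Orthonormal ℝ e)
    (hIJ : (I ∩ J).Nonempty) :
    ∃ A, 0 < A ∧ ∀ x ∈ (span ℝ (range (perturbedBasisFamily e I J))).topologicalClosure,
      A * ‖x‖ ^ 2 ≤ ∑' l, ⟪x, perturbedBasisFamily e I J l⟫_ℝ ^ 2 := by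
  obtain ⟨k, hk⟩ := hIJ
  set G := ∑' j : J, ((2 : ℝ) ^ (j : ℕ))⁻¹ ^ 2
  have hG : 0 ≤ G := tsum_nonneg fun _ => sq_nonneg _
  -- `‖x‖² ≤ (1 + 2G) ⟪x, e 1⟫² + 2S` and `⟪x, e 1⟫² ≤ 2 · 4^k S`, where `S` is the frame sum
  refine ⟨((1 + 2 * G) * (2 * 4 ^ k) + 2)⁻¹, by positivity, fun x hx => ?_⟩
  rw [span_range_perturbedBasisFamily ⟨k, hk⟩] at hx
  have hsum := (isBesselSeq_perturbedBasisFamily (I := I) (J := J) he x).1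
  have hsplit : ∑' l, ⟪x, perturbedBasisFamily e I J l⟫_ℝ ^ 2 = ∑' i : I, ⟪x, e i⟫_ℝ ^ 2 +
      ∑' j, ⟪x, perturbedBasisFamily e I J (.inr j)⟫_ℝ ^ 2 :=
    Summable.tsum_sum (hsum.comp_injective Sum.inl_injective)
      (hsum.comp_injective Sum.inr_injective)
  have h1 := norm_sq_le_of_mem_closure_span_union he hx
  have h2 := tsum_inner_sq_le_perturbedBasisFamily (I := I) (J := J) he x
  have h3 := inner_e_one_sq_le_perturbedBasisFamily hk hsum
  have hI : 0 ≤ ∑' i : I, ⟪x, e i⟫_ℝ ^ 2 := tsum_nonneg fun _ => sq_nonneg _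
  have hJ : 0 ≤ ∑' j, ⟪x, perturbedBasisFamily e I J (.inr j)⟫_ℝ ^ 2 :=
    tsum_nonneg fun _ => sq_nonneg _
  rw [inv_mul_le_iff₀ (by positivity)]
  nlinarith [mul_le_mul_of_nonneg_left h3 (by positivity : (0 : ℝ) ≤ 1 + 2 * G)]

end PerturbedBasis

theorem stmt_16_general {H : Type*} [NormedAddCommGroup H] [InnerProductSpace ℝ H]
    [CompleteSpace H]
    (e : ℕ → H) (he : Orthonormal ℝ e)
    (I J : Set ℕ) (hIJ : (I ∩ J).Nonempty)
    -- the family `{f_i}_{i ∈ L}` consisting of `e_i` for `i ∈ I` together with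
    -- `e_i + 2^{-i} e_1` for `i ∈ J`
    (f : ↥I ⊕ ↥J → H)
    (hfI : ∀ i : ↥I, f (Sum.inl i) = e (i : ℕ))
    (hfJ : ∀ j : ↥J, f (Sum.inr j) = e (j : ℕ) + ((2 : ℝ) ^ (j : ℕ))⁻¹ • e 1) :
    -- the synthesis operator is well defined, bounded, and maps onto the closed span
    (∃ T : lp (fun _ : ↥I ⊕ ↥J => ℝ) 2 →L[ℝ] H,
      (∀ c : lp (fun _ : ↥I ⊕ ↥J => ℝ) 2, HasSum (fun l => c l • f l) (T c)) ∧
      Set.range T = ((Submodule.span ℝ (Set.range f)).topologicalClosure : Set H)) ∧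
    -- consequently `{f_i}` is a frame for its closed linear span ...
    IsFrameFor f ((Submodule.span ℝ (Set.range f)).topologicalClosure : Set H) ∧
    -- ... which equals the closed span of `{e_1} ∪ {e_i}_{i ∈ I ∪ J}`
    (Submodule.span ℝ (Set.range f)).topologicalClosure
      = (Submodule.span ℝ ({e 1} ∪ e '' (I ∪ J))).topologicalClosure := by
  obtain rfl : f = perturbedBasisFamily e I J := funext <| Sum.rec hfI hfJ
  have hf := isBesselSeq_perturbedBasisFamily (I := I) (J := J) he
  obtain ⟨A, hA, hlow⟩ := exists_lower_frame_bound_perturbedBasisFamily he hIJ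
  refine ⟨⟨hf.synthesisOp, hf.hasSum_synthesisOp, hf.range_synthesisOp hA hlow⟩,
    ⟨A, _, hA, by positivity, fun x hx => ⟨hlow x hx, (hf x).2⟩⟩, ?_⟩
  rw [span_range_perturbedBasisFamily hIJ]

theorem stmt_16 {H : Type*} [NormedAddCommGroup H] [InnerProductSpace ℝ H]
    [CompleteSpace H] [TopologicalSpace.SeparableSpace H]
    (e : ℕ → H) (he : Orthonormal ℝ e)
    (hbasis : (Submodule.span ℝ (Set.range fun n : {n : ℕ // 1 ≤ n} => e (n : ℕ))).topologicalClosure = ⊤)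
    (I J : Set ℕ) (hI : I ⊆ {n | 2 ≤ n}) (hJ : J ⊆ {n | 2 ≤ n}) (hIJ : (I ∩ J).Nonempty)
    -- the family `{f_i}_{i ∈ L}` consisting of `e_i` for `i ∈ I` together with
    -- `e_i + 2^{-i} e_1` for `i ∈ J`
    (f : ↥I ⊕ ↥J → H)
    (hfI : ∀ i : ↥I, f (Sum.inl i) = e (i : ℕ))
    (hfJ : ∀ j : ↥J, f (Sum.inr j) = e (j : ℕ) + ((2 : ℝ) ^ (j : ℕ))⁻¹ • e 1) :
    -- the synthesis operator is well defined, bounded, and maps onto the closed span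
    (∃ T : lp (fun _ : ↥I ⊕ ↥J => ℝ) 2 →L[ℝ] H,
      (∀ c : lp (fun _ : ↥I ⊕ ↥J => ℝ) 2, HasSum (fun l => c l • f l) (T c)) ∧
      Set.range T = ((Submodule.span ℝ (Set.range f)).topologicalClosure : Set H)) ∧
    -- consequently `{f_i}` is a frame for its closed linear span ...
    IsFrameFor f ((Submodule.span ℝ (Set.range f)).topologicalClosure : Set H) ∧
    -- ... which equals the closed span of `{e_1} ∪ {e_i}_{i ∈ I ∪ J}`
    (Submodule.span ℝ (Set.range f)).topologicalClosure
      = (Submodule.span ℝ ({e 1} ∪ e '' (I ∪ J))).topologicalClosure :=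
  stmt_16_general e he I J hIJ f hfI hfJ
end

section
/- Let X be a Banach space with no closed subspace isomorphic to c₀, and let {x_n}_{n=1}^∞ ⊆ X satisfy sup_{Δ} ‖∑_{n∈Δ} x_n‖ < ∞, where the supremum is over all finite subsets Δ of ℕ. Then the series ∑_n x_n converges unconditionally in X. -/
/-!
If the series is not summable, the Cauchy criterion fails and yields pairwise disjoint blocks
whose sums `y k` satisfy `ε ≤ ‖y k‖`, while all finite sums of the `y k` stay bounded by `M`.
Bounded finite sums give `∑ |f (y k)| ≤ 2 M ‖f‖` for every functional `f`, so `y` is weakly null,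
and Mazur's argument extracts a basic subsequence `z` with basis constant `2`. The map
`a ↦ ∑ aᵢ zᵢ` is then bounded on `c₀` (again by bounded finite sums) and bounded below (by the
basis constant and `ε ≤ ‖zᵢ‖`), so it embeds `c₀` as a closed subspace.
-/

open scoped BigOperators ZeroAtInfty
open Filter

/-- The series `∑ v i` converges (in the usual ordered sense of partial sums). -/
def SeriesConverges {X : Type*} [NormedAddCommGroup X] [NormedSpace ℝ X] (v : ℕ → X) : Prop :=
  ∃ x : X, Tendsto (fun n => ∑ i ∈ Finset.range n, v i) atTop (nhds x)

open Finset Function Topology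

section FiniteSumsBounded

variable {X : Type*} [NormedAddCommGroup X] [NormedSpace ℝ X] {y : ℕ → X} {M : ℝ}

lemma sum_abs_apply_le_of_forall_norm_sum_le (hM : ∀ G : Finset ℕ, ‖∑ k ∈ G, y k‖ ≤ M)
    (f : StrongDual ℝ X) (F : Finset ℕ) : ∑ k ∈ F, |f (y k)| ≤ 2 * M * ‖f‖ := by
  classical
  have hG : ∀ G : Finset ℕ, |f (∑ k ∈ G, y k)| ≤ M * ‖f‖ := fun G =>
    (f.le_opNorm _).trans <| by
      rw [mul_comm]; exact mul_le_mul_of_nonneg_right (hM G) (norm_nonneg f)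
  have hpos : ∑ k ∈ F with 0 ≤ f (y k), |f (y k)| = f (∑ k ∈ F with 0 ≤ f (y k), y k) := by
    rw [map_sum]
    exact sum_congr rfl fun k hk => abs_of_nonneg (mem_filter.1 hk).2
  have hneg : ∑ k ∈ F with ¬0 ≤ f (y k), |f (y k)| = -f (∑ k ∈ F with ¬0 ≤ f (y k), y k) := by
    rw [map_sum, ← sum_neg_distrib]
    exact sum_congr rfl fun k hk => abs_of_neg (not_le.1 (mem_filter.1 hk).2)
  rw [← sum_filter_add_sum_filter_not F (fun k => 0 ≤ f (y k)), hpos, hneg]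
  linarith [le_abs_self (f (∑ k ∈ F with 0 ≤ f (y k), y k)),
    neg_le_abs (f (∑ k ∈ F with ¬0 ≤ f (y k), y k)), hG {k ∈ F | 0 ≤ f (y k)},
    hG {k ∈ F | ¬0 ≤ f (y k)}]

lemma norm_sum_smul_le_of_forall_norm_sum_le (hM : ∀ G : Finset ℕ, ‖∑ k ∈ G, y k‖ ≤ M)
    {a : ℕ → ℝ} {F : Finset ℕ} {C : ℝ} (hC : 0 ≤ C) (ha : ∀ i ∈ F, |a i| ≤ C) :
    ‖∑ i ∈ F, a i • y i‖ ≤ 2 * M * C := by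
  have hM0 : 0 ≤ M := by simpa using hM ∅
  obtain ⟨f, hf1, hfv⟩ := exists_dual_vector'' ℝ (∑ i ∈ F, a i • y i)
  calc ‖∑ i ∈ F, a i • y i‖ = ∑ i ∈ F, a i * f (y i) := by
        simpa using hfv.symm
    _ ≤ ∑ i ∈ F, C * |f (y i)| := sum_le_sum fun i hi => (le_abs_self _).trans <| by
        rw [abs_mul]; exact mul_le_mul_of_nonneg_right (ha i hi) (abs_nonneg _)
    _ = C * ∑ i ∈ F, |f (y i)| := (mul_sum _ _ _).symm
    _ ≤ C * (2 * M * ‖f‖) :=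
        mul_le_mul_of_nonneg_left (sum_abs_apply_le_of_forall_norm_sum_le hM f F) hC
    _ ≤ 2 * M * C := by nlinarith [mul_nonneg hC hM0]

lemma tendsto_apply_of_forall_norm_sum_le (hM : ∀ G : Finset ℕ, ‖∑ k ∈ G, y k‖ ≤ M)
    (f : StrongDual ℝ X) : Tendsto (fun k => f (y k)) atTop (𝓝 0) :=
  (summable_abs_iff.1 (summable_of_sum_range_le (fun _ => abs_nonneg _)
    fun n => sum_abs_apply_le_of_forall_norm_sum_le hM f (range n))).tendsto_atTop_zero

lemma summable_smul_of_forall_norm_sum_le [CompleteSpace X]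
    (hM : ∀ G : Finset ℕ, ‖∑ k ∈ G, y k‖ ≤ M) {a : ℕ → ℝ} (ha : Tendsto a atTop (𝓝 0)) :
    Summable fun i => a i • y i := by
  have hM0 : 0 ≤ M := by simpa using hM ∅
  refine summable_iff_vanishing_norm.2 fun ε hε => ?_
  have hC : 0 < ε / (2 * M + 1) := by positivity
  obtain ⟨N, hN⟩ := Metric.tendsto_atTop.1 ha _ hC
  refine ⟨range N, fun t ht => ?_⟩
  have hat : ∀ i ∈ t, |a i| ≤ ε / (2 * M + 1) := fun i hi => by
    have hiN : N ≤ i := by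
      by_contra! h
      exact disjoint_left.1 ht hi (mem_range.2 h)
    simpa [Real.dist_eq] using (hN i hiN).le
  calc ‖∑ i ∈ t, a i • y i‖ ≤ 2 * M * (ε / (2 * M + 1)) :=
        norm_sum_smul_le_of_forall_norm_sum_le hM hC.le hat
    _ < ε := by rw [← mul_div_assoc, div_lt_iff₀ (by positivity)]; nlinarith

end FiniteSumsBounded

section Mazur

variable {X : Type*} [NormedAddCommGroup X] [NormedSpace ℝ X]

lemma IsCompact.exists_finset_dual_norm_sub_lt {K : Set X} (hK : IsCompact K) {δ : ℝ}
    (hδ : 0 < δ) : ∃ Φ : Finset (StrongDual ℝ X), (∀ φ ∈ Φ, ‖φ‖ ≤ 1) ∧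
      ∀ u ∈ K, ∃ φ ∈ Φ, ‖u‖ - δ < φ u := by
  classical
  choose g hg1 hgv using fun v : X => exists_dual_vector'' ℝ v
  obtain ⟨V, -, hcover⟩ := hK.elim_nhds_subcover (fun v => {u | ‖u‖ - δ < g v u})
    fun v _ => (isOpen_lt (by fun_prop) (g v).continuous).mem_nhds (by simp [hgv v, hδ])
  refine ⟨V.image g, by simpa using fun v _ => hg1 v, fun u hu => ?_⟩
  obtain ⟨v, hv, huv⟩ := Set.mem_iUnion₂.1 (hcover hu)
  exact ⟨g v, mem_image_of_mem g hv, huv⟩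

lemma Submodule.exists_finset_dual_norming (E : Submodule ℝ X) [FiniteDimensional ℝ E] {δ : ℝ}
    (hδ : 0 < δ) : ∃ Φ : Finset (StrongDual ℝ X), (∀ φ ∈ Φ, ‖φ‖ ≤ 1) ∧
      ∀ w ∈ E, ∃ φ ∈ Φ, (1 - δ) * ‖w‖ ≤ φ w := by
  classical
  obtain ⟨Φ, hΦ1, hΦ⟩ :=
    ((isCompact_sphere (0 : E) 1).image continuous_subtype_val).exists_finset_dual_norm_sub_lt hδ
  refine ⟨insert 0 Φ, by simpa using hΦ1, fun w hw => ?_⟩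
  rcases eq_or_ne w 0 with rfl | hw0
  · exact ⟨0, mem_insert_self _ _, by simp⟩
  have hwpos : 0 < ‖w‖ := norm_pos_iff.2 hw0
  obtain ⟨φ, hφ, hlt⟩ := hΦ (‖w‖⁻¹ • w)
    ⟨⟨_, E.smul_mem _ hw⟩, by simp [norm_smul, hwpos.ne'], rfl⟩
  refine ⟨φ, mem_insert_of_mem hφ, ?_⟩
  rw [map_smul, smul_eq_mul, norm_smul, norm_inv, norm_norm, inv_mul_cancel₀ hwpos.ne',
    lt_inv_mul_iff₀ hwpos] at hlt
  linarith

lemma eventually_one_sub_mul_norm_le_norm_add_smul {y : ℕ → X}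
    (hnull : ∀ f : StrongDual ℝ X, Tendsto (fun k => f (y k)) atTop (𝓝 0)) {ε : ℝ}
    (hε : 0 < ε) (hy : ∀ k, ε ≤ ‖y k‖) (E : Submodule ℝ X) [FiniteDimensional ℝ E] {δ : ℝ}
    (hδ : 0 < δ) : ∀ᶠ k in atTop, ∀ w ∈ E, ∀ t : ℝ, (1 - δ) * ‖w‖ ≤ ‖w + t • y k‖ := by
  obtain ⟨Φ, hΦ1, hΦ⟩ := E.exists_finset_dual_norming (half_pos hδ)
  have hsmall : ∀ᶠ k in atTop, ∀ φ ∈ Φ, |φ (y k)| < δ * ε / 4 :=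
    Φ.eventually_all.2 fun φ _ => ((hnull φ).eventually
      (Metric.ball_mem_nhds 0 (show 0 < δ * ε / 4 by positivity))).mono fun k hk => by
        simpa [Real.dist_eq] using hk
  refine hsmall.mono fun k hk w hw t => ?_
  obtain ⟨φ, hφ, hφw⟩ := hΦ w hw
  rcases le_or_gt (2 * ‖w‖) (|t| * ε) with hbig | hsmallt
  · have hty : |t| * ε ≤ ‖t • y k‖ := by
      rw [norm_smul, Real.norm_eq_abs]; exact mul_le_mul_of_nonneg_left (hy k) (abs_nonneg t)
    have := norm_sub_le_norm_add (t • y k) w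
    rw [add_comm] at this
    nlinarith [norm_nonneg w]
  · have htφ : |t * φ (y k)| ≤ δ / 2 * ‖w‖ := by
      rw [abs_mul]
      calc |t| * |φ (y k)| ≤ |t| * (δ * ε / 4) :=
            mul_le_mul_of_nonneg_left (hk φ hφ).le (abs_nonneg t)
        _ = |t| * ε * (δ / 4) := by ring
        _ ≤ 2 * ‖w‖ * (δ / 4) := mul_le_mul_of_nonneg_right hsmallt.le (by positivity)
        _ = δ / 2 * ‖w‖ := by ring
    calc (1 - δ) * ‖w‖ ≤ φ w + t * φ (y k) := by linarith [neg_abs_le (t * φ (y k))]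
      _ = φ (w + t • y k) := by simp
      _ ≤ ‖w + t • y k‖ := (le_abs_self _).trans <| (φ.le_opNorm _).trans <|
          mul_le_of_le_one_left (norm_nonneg _) (hΦ1 φ hφ)

end Mazur

lemma exists_strictMono_forall_lt_of_eventually {Q : ℕ → ℕ → Prop}
    (h : ∀ i, ∀ᶠ j in atTop, Q i j) :
    ∃ φ : ℕ → ℕ, StrictMono φ ∧ ∀ m n, m < n → Q (φ m) (φ n) := by
  obtain ⟨φ, -, hφ⟩ := exists_seq_of_forall_finset_exists (fun _ => True)
    (fun i j => i < j ∧ Q i j) fun s _ =>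
      ((s.eventually_all.2 fun i _ => (eventually_gt_atTop i).and (h i)).exists).imp
        fun _ hj => ⟨trivial, hj⟩
  exact ⟨φ, fun m n hmn => (hφ m n hmn).1, fun m n hmn => (hφ m n hmn).2⟩

lemma Finset.one_sub_sum_le_prod_one_sub {ι : Type*} (s : Finset ι) {η : ι → ℝ}
    (h0 : ∀ i, 0 ≤ η i) (h1 : ∀ i, η i ≤ 1) : 1 - ∑ i ∈ s, η i ≤ ∏ i ∈ s, (1 - η i) := by
  classical
  induction s using Finset.induction_on with
  | empty => simp
  | insert a s ha ih =>
    rw [sum_insert ha, prod_insert ha]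
    have hprod : ∏ i ∈ s, (1 - η i) ≤ 1 :=
      prod_le_one (fun i _ => by linarith [h1 i]) fun i _ => by linarith [h0 i]
    nlinarith [h0 a, h1 a]

lemma le_two_mul_of_one_sub_mul_le {s : ℕ → ℝ} (hs0 : ∀ n, 0 ≤ s n)
    (hs : ∀ m, (1 - (1 / 2) ^ (m + 2)) * s m ≤ s (m + 1)) {n m : ℕ} (hnm : n ≤ m) :
    s n ≤ 2 * s m := by
  set η : ℕ → ℝ := fun j => (1 / 2) ^ (j + 2)
  have hη0 : ∀ j, 0 ≤ η j := fun j => by positivity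
  have hη1 : ∀ j, η j ≤ 1 := fun j => pow_le_one₀ (by norm_num) (by norm_num)
  have hchain : s n * ∏ j ∈ Ico n m, (1 - η j) ≤ s m := by
    induction m, hnm using Nat.le_induction with
    | base => simp
    | succ m hnm ih =>
      rw [prod_Ico_succ_top hnm, ← mul_assoc]
      exact (mul_le_mul_of_nonneg_right ih (by linarith [hη1 m])).trans
        (by linarith [hs m])
  have hsum : ∑ j ∈ Ico n m, η j ≤ 1 / 2 :=
    calc ∑ j ∈ Ico n m, η j ≤ ∑ j ∈ range m, η j :=
          sum_le_sum_of_subset_of_nonneg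
            (by rw [range_eq_Ico]; exact Ico_subset_Ico_left (Nat.zero_le n)) fun j _ _ => hη0 j
      _ = (∑ j ∈ range m, (1 / 2 : ℝ) ^ j) * (1 / 4) := by
          rw [sum_mul]; exact sum_congr rfl fun j _ => by simp only [η, pow_add]; norm_num
      _ ≤ 2 * (1 / 4) := by gcongr; exact sum_geometric_two_le m
      _ = 1 / 2 := by norm_num
  have hprod := (Ico n m).one_sub_sum_le_prod_one_sub hη0 hη1
  nlinarith [hs0 n]

section BasicSubsequence

variable {X : Type*} [NormedAddCommGroup X] [NormedSpace ℝ X]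

open Submodule in
/-- `y ∘ φ` is a basic sequence with basis constant at most `2`. -/
lemma exists_strictMono_norm_sum_range_le_two_mul {y : ℕ → X}
    (hstep : ∀ E : Submodule ℝ X, FiniteDimensional ℝ E → ∀ δ > 0,
      ∀ᶠ k in atTop, ∀ w ∈ E, ∀ t : ℝ, (1 - δ) * ‖w‖ ≤ ‖w + t • y k‖) :
    ∃ φ : ℕ → ℕ, StrictMono φ ∧ ∀ (a : ℕ → ℝ) {n m : ℕ}, n ≤ m →
      ‖∑ i ∈ range n, a i • y (φ i)‖ ≤ 2 * ‖∑ i ∈ range m, a i • y (φ i)‖ := by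
  -- the factor is indexed by the value `φ m ≥ m`, which only makes it closer to `1`
  obtain ⟨φ, hφ, hQ⟩ := exists_strictMono_forall_lt_of_eventually (Q := fun i j =>
      ∀ w ∈ span ℝ (y '' Set.Iic i), ∀ t : ℝ, (1 - (1 / 2) ^ (i + 3)) * ‖w‖ ≤ ‖w + t • y j‖)
    fun i => hstep _ (FiniteDimensional.span_of_finite ℝ ((Set.finite_Iic i).image y)) _
      (by positivity)
  refine ⟨φ, hφ, fun a n m hnm =>
    le_two_mul_of_one_sub_mul_le (s := fun m => ‖∑ i ∈ range m, a i • y (φ i)‖)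
      (fun _ => norm_nonneg _) (fun m => ?_) hnm⟩
  rcases m with _ | m
  · simp
  have hmem : ∑ i ∈ range (m + 1), a i • y (φ i) ∈ span ℝ (y '' Set.Iic (φ m)) :=
    sum_mem fun i hi => smul_mem _ _ <|
      subset_span ⟨φ i, hφ.monotone (Nat.lt_succ_iff.1 (mem_range.1 hi)), rfl⟩
  have hη : (1 / 2 : ℝ) ^ (φ m + 3) ≤ (1 / 2) ^ (m + 3) :=
    pow_le_pow_of_le_one (by norm_num) (by norm_num) (Nat.add_le_add_right (hφ.id_le m) 3)
  rw [sum_range_succ _ (m + 1)]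
  calc (1 - (1 / 2) ^ (m + 1 + 2)) * ‖∑ i ∈ range (m + 1), a i • y (φ i)‖
      ≤ (1 - (1 / 2) ^ (φ m + 3)) * ‖∑ i ∈ range (m + 1), a i • y (φ i)‖ :=
        mul_le_mul_of_nonneg_right (by linarith) (norm_nonneg _)
    _ ≤ _ := hQ m (m + 1) (lt_add_one m) _ hmem (a (m + 1))

end BasicSubsequence

open scoped NNReal in
lemma ContinuousLinearMap.exists_isClosed_submodule_equiv_of_antilipschitz {E F : Type*}
    [NormedAddCommGroup E] [NormedSpace ℝ E] [CompleteSpace E] [NormedAddCommGroup F]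
    [NormedSpace ℝ F] [CompleteSpace F] (T : E →L[ℝ] F) {K : ℝ≥0} (hT : AntilipschitzWith K T) :
    ∃ Y : Submodule ℝ F, IsClosed (Y : Set F) ∧ Nonempty (Y ≃L[ℝ] E) :=
  have hclosed := (hT.isClosedEmbedding T.uniformContinuous).isClosed_range
  ⟨T.range, by rwa [LinearMap.coe_range], ⟨(T.equivRange hT.injective hclosed).symm⟩⟩

lemma ZeroAtInftyContinuousMap.abs_apply_le_norm (a : C₀(ℕ, ℝ)) (i : ℕ) : |a i| ≤ ‖a‖ := by
  simpa [norm_toBCF_eq_norm] using a.toBCF.norm_coe_le_norm i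

lemma ZeroAtInftyContinuousMap.tendsto_atTop_zero (a : C₀(ℕ, ℝ)) :
    Tendsto a atTop (𝓝 0) := by
  simpa [cocompact_eq_atTop] using a.zero_at_infty'

section SumMap

variable {X : Type*} [NormedAddCommGroup X] [NormedSpace ℝ X] [CompleteSpace X] {z : ℕ → X}
  {M : ℝ}

lemma hasSum_smul_of_forall_norm_sum_le (hM : ∀ G : Finset ℕ, ‖∑ k ∈ G, z k‖ ≤ M) (a : C₀(ℕ, ℝ)) :
    HasSum (fun i => a i • z i) (∑' i, a i • z i) :=
  (summable_smul_of_forall_norm_sum_le hM a.tendsto_atTop_zero).hasSum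

noncomputable def c0SumCLM (hM : ∀ G : Finset ℕ, ‖∑ k ∈ G, z k‖ ≤ M) : C₀(ℕ, ℝ) →L[ℝ] X :=
  LinearMap.mkContinuous
    { toFun := fun a => ∑' i, a i • z i
      map_add' := fun a b => by
        simp only [ZeroAtInftyContinuousMap.coe_add, Pi.add_apply, add_smul]
        exact (hasSum_smul_of_forall_norm_sum_le hM a).add
          (hasSum_smul_of_forall_norm_sum_le hM b) |>.tsum_eq
      map_smul' := fun c a => by
        simp only [ZeroAtInftyContinuousMap.coe_smul, Pi.smul_apply, smul_eq_mul, mul_smul,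
          RingHom.id_apply]
        exact ((hasSum_smul_of_forall_norm_sum_le hM a).const_smul c).tsum_eq }
    (2 * M) fun a => le_of_tendsto' (hasSum_smul_of_forall_norm_sum_le hM a).norm fun _ =>
      norm_sum_smul_le_of_forall_norm_sum_le hM (norm_nonneg a) fun i _ => a.abs_apply_le_norm i

lemma hasSum_c0SumCLM (hM : ∀ G : Finset ℕ, ‖∑ k ∈ G, z k‖ ≤ M) (a : C₀(ℕ, ℝ)) :
    HasSum (fun i => a i • z i) (c0SumCLM hM a) :=
  hasSum_smul_of_forall_norm_sum_le hM a

lemma antilipschitz_c0SumCLM (hM : ∀ G : Finset ℕ, ‖∑ k ∈ G, z k‖ ≤ M) {ε : ℝ} (hε : 0 < ε)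
    (hz : ∀ k, ε ≤ ‖z k‖)
    (hbasic : ∀ (a : ℕ → ℝ) {n m : ℕ}, n ≤ m →
      ‖∑ i ∈ range n, a i • z i‖ ≤ 2 * ‖∑ i ∈ range m, a i • z i‖) :
    AntilipschitzWith (Real.toNNReal (4 / ε)) (c0SumCLM hM) := by
  refine (c0SumCLM hM).antilipschitz_of_bound fun a => ?_
  have hcoef : ∀ i, |a i| * ε ≤ 4 * ‖c0SumCLM hM a‖ := fun i => by
    have hpartial : ∀ m ≥ i + 1, |a i| * ε ≤ 4 * ‖∑ j ∈ range m, a j • z j‖ := fun m him =>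
      calc |a i| * ε ≤ ‖a i • z i‖ := by
            rw [norm_smul, Real.norm_eq_abs]; exact mul_le_mul_of_nonneg_left (hz i) (abs_nonneg _)
        _ = ‖∑ j ∈ range (i + 1), a j • z j - ∑ j ∈ range i, a j • z j‖ := by
            rw [sum_range_succ, add_sub_cancel_left]
        _ ≤ ‖∑ j ∈ range (i + 1), a j • z j‖ + ‖∑ j ∈ range i, a j • z j‖ := norm_sub_le _ _
        _ ≤ 4 * ‖∑ j ∈ range m, a j • z j‖ := by
            linarith [hbasic a him, hbasic a (Nat.le_of_succ_le him)]
    exact ge_of_tendsto ((hasSum_c0SumCLM hM a).tendsto_sum_nat.norm.const_mul 4)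
      (eventually_atTop.2 ⟨i + 1, hpartial⟩)
  rw [Real.coe_toNNReal _ (by positivity), ← ZeroAtInftyContinuousMap.norm_toBCF_eq_norm,
    BoundedContinuousFunction.norm_le (by positivity)]
  intro i
  rw [Real.norm_eq_abs, div_mul_eq_mul_div, le_div_iff₀ hε]
  exact hcoef i

end SumMap

lemma exists_pairwise_disjoint_le_norm_sum_of_not_summable {X : Type*} [NormedAddCommGroup X]
    [CompleteSpace X] {x : ℕ → X} (h : ¬Summable x) :
    ∃ ε > 0, ∃ Δ : ℕ → Finset ℕ, Pairwise (Disjoint on Δ) ∧ ∀ n, ε ≤ ‖∑ i ∈ Δ n, x i‖ := by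
  rw [summable_iff_vanishing_norm] at h
  push Not at h
  obtain ⟨ε, hε, hfar⟩ := h
  obtain ⟨Δ, hΔ, hdisj⟩ := exists_seq_of_forall_finset_exists'
    (fun t : Finset ℕ => ε ≤ ‖∑ i ∈ t, x i‖) Disjoint fun S _ => by
      obtain ⟨t, ht, hnorm⟩ := hfar (S.sup id)
      exact ⟨t, hnorm, fun s hs => (ht.mono_right (le_sup (f := id) hs)).symm⟩
  exact ⟨ε, hε, Δ, hdisj, hΔ⟩

theorem summable_of_forall_norm_sum_le {X : Type*} [NormedAddCommGroup X] [NormedSpace ℝ X]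
    [CompleteSpace X] {x : ℕ → X}
    (hc0 : ¬∃ Y : Submodule ℝ X, IsClosed (Y : Set X) ∧ Nonempty (Y ≃L[ℝ] C₀(ℕ, ℝ))) {M : ℝ}
    (hbd : ∀ Δ : Finset ℕ, ‖∑ n ∈ Δ, x n‖ ≤ M) : Summable x := by
  by_contra hx
  obtain ⟨ε, hε, Δ, hdisj, hΔ⟩ := exists_pairwise_disjoint_le_norm_sum_of_not_summable hx
  set y : ℕ → X := fun k => ∑ i ∈ Δ k, x i
  have hy : ∀ G : Finset ℕ, ‖∑ k ∈ G, y k‖ ≤ M := fun G => by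
    rw [← sum_biUnion (hdisj.set_pairwise _)]; exact hbd _
  obtain ⟨φ, hφ, hbasic⟩ := exists_strictMono_norm_sum_range_le_two_mul fun E _ δ hδ =>
    eventually_one_sub_mul_norm_le_norm_add_smul (tendsto_apply_of_forall_norm_sum_le hy) hε
      hΔ E hδ
  have hyφ : ∀ G : Finset ℕ, ‖∑ k ∈ G, y (φ k)‖ ≤ M := fun G => by
    rw [← sum_image fun _ _ _ _ h => hφ.injective h]; exact hy _
  exact hc0 <| (c0SumCLM hyφ).exists_isClosed_submodule_equiv_of_antilipschitz <|
    antilipschitz_c0SumCLM hyφ hε (fun k => hΔ (φ k)) hbasic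

theorem stmt_18 {X : Type*} [NormedAddCommGroup X] [NormedSpace ℝ X] [CompleteSpace X]
    -- no closed subspace of `X` is isomorphic to `c₀`
    (hc0 : ¬ ∃ Y : Submodule ℝ X, IsClosed (Y : Set X) ∧ Nonempty (Y ≃L[ℝ] C₀(ℕ, ℝ)))
    (x : ℕ → X)
    (hbd : ∃ M : ℝ, ∀ Δ : Finset ℕ, ‖∑ n ∈ Δ, x n‖ ≤ M) :
    -- `∑ xₙ` converges unconditionally
    ∀ π : Equiv.Perm ℕ, SeriesConverges (fun n => x (π n)) := by
  obtain ⟨M, hM⟩ := hbd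
  obtain ⟨s, hs⟩ := summable_of_forall_norm_sum_le hc0 hM
  exact fun π => ⟨s, ((Equiv.hasSum_iff π).2 hs).tendsto_sum_nat⟩
end
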